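/- arXiv:1208.3505 — 6 statements merged into one kernel-verified Lean document; each statement's English description precedes it below -/
import Mathlib

section
/- Let q be a super growth sequence, φ the associated dyadic cocycle over the dyadic odometer τ on Ω = {0,1}^{ℕ≥1} with Bernoulli(1/2) product measure P, and φ_N its N-step Birkhoff sum. Then for every integer n ≥ 1: if n = N(ε) for some ε ∈ ℰ⁺, then P({ω ∈ Ω : ∃ N ≥ 1 with φ_N(ω) = n}) = 2^{−‖ε‖}; and if n is not of the form N(ε) for any ε ∈ ℰ⁺, then P({ω ∈ Ω : ∃ N ≥ 1 with φ_N(ω) = n}) = 0. -/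
open Finset MeasureTheory


/-- A super growth sequence: strictly increasing positive integers (indexed by `n ≥ 1`)
with `q n > 2·∑_{k=1}^{n-1} q k` (the value `q 0` is irrelevant). -/
def IsSuperGrowth (q : ℕ → ℕ) : Prop :=
  (∀ n, 1 ≤ n → 0 < q n) ∧ (∀ m n, 1 ≤ m → m < n → q m < q n) ∧
    ∀ n, 1 ≤ n → 2 * ∑ k ∈ Finset.Icc 1 (n - 1), q k < q n

/-- Membership in `ℰ`: finitely supported sequences `{1,2,...} → {−1,0,1}` (modelled as
functions on `ℕ` vanishing at the irrelevant index `0`). -/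
def IsEps (ε : ℕ → ℤ) : Prop :=
  ε 0 = 0 ∧ (∀ k, ε k = -1 ∨ ε k = 0 ∨ ε k = 1) ∧ (Function.support ε).Finite

/-- `N(ε) = ∑_{k ≥ 1} ε k · q k`. -/
noncomputable def Nval (q : ℕ → ℕ) (ε : ℕ → ℤ) : ℤ := ∑ᶠ k, ε k * (q k : ℤ)

/-- `‖ε‖ = ∑_{k ≥ 1} |ε k|`. -/
noncomputable def normE (ε : ℕ → ℤ) : ℕ := ∑ᶠ k, (ε k).natAbs

/-- `κ(ε) = max{k : ε k ≠ 0}` (junk value for `ε = 0`). -/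
noncomputable def kap (ε : ℕ → ℤ) : ℕ := sSup (Function.support ε)

/-- Membership in `ℰ⁺`: nonzero `ε ∈ ℰ` with `ε (κ ε) = 1`. -/
def IsEplus (ε : ℕ → ℤ) : Prop := IsEps ε ∧ ε ≠ 0 ∧ ε (kap ε) = 1

/-- `c n = min{k ≥ 1 : q k ≥ n}`. -/
noncomputable def cIdx (q : ℕ → ℕ) (n : ℕ) : ℕ := sInf {k | 1 ≤ k ∧ n ≤ q k}

/-- A growth sequence: strictly increasing positive integers (indexed by `n ≥ 1`) with
`q n > ∑_{k=1}^{n-1} q k` (the value `q 0` is irrelevant). -/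
def IsGrowth (q : ℕ → ℕ) : Prop :=
  (∀ n, 1 ≤ n → 0 < q n) ∧ (∀ m n, 1 ≤ m → m < n → q m < q n) ∧
    ∀ n, 1 ≤ n → ∑ k ∈ Finset.Icc 1 (n - 1), q k < q n

/-- `ℓ(ω) = min{n ≥ 1 : ω n = 0}`, where points of `Ω = {0,1}^{ℕ≥1}` are modelled as
functions `ℕ → Bool` whose value at the irrelevant index `0` is ignored (`ℓ` takes the
junk value `0` when no such `n` exists). -/
noncomputable def ell (ω : ℕ → Bool) : ℕ := sInf {n | 1 ≤ n ∧ ω n = false}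

/-- The dyadic odometer `τ`: `τ(ω)(k) = 0` for `1 ≤ k < ℓ(ω)`, `τ(ω)(ℓ(ω)) = 1`,
`τ(ω)(k) = ω k` otherwise (in particular `τ` is the identity on the null set where
`ℓ(ω) = 0`, and the irrelevant coordinate `0` is left unchanged). -/
noncomputable def odo (ω : ℕ → Bool) : ℕ → Bool := fun k =>
  if k = 0 then ω 0
  else if k < ell ω then false
  else if k = ell ω then true
  else ω k

/-- The dyadic cocycle `φ(ω) = q (ℓ ω) − ∑_{k=1}^{ℓ ω − 1} q k` (taking values in `ℤ`;
it is a positive integer off a null set). -/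
noncomputable def phi (q : ℕ → ℕ) (ω : ℕ → Bool) : ℤ :=
  (q (ell ω) : ℤ) - ∑ k ∈ Finset.Icc 1 (ell ω - 1), (q k : ℤ)

/-- The Birkhoff sums `φ_N = ∑_{j=0}^{N−1} φ ∘ τ^j`. -/
noncomputable def phiN (q : ℕ → ℕ) (N : ℕ) (ω : ℕ → Bool) : ℤ :=
  ∑ j ∈ Finset.range N, phi q (odo^[j] ω)

/-
For a point `ω` with infinitely many zeros the cocycle telescopes: `φ ω = N(τ ω − ω)`, hence
`φ_N ω = N(τ^N ω − ω)`. Reading the coordinates `1, …, M` of `ω` as a binary number (least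
significant digit first), `τ` adds one to it, so `τ^N ω − ω` lies in `ℰ⁺` for `N ≥ 1`, and
conversely `τ^N ω = ω + ε` for some `N ≥ 1` exactly when `ω` has digit `0` where `ε = 1`
and digit `1` where `ε = −1`, a cylinder of measure `2^{−‖ε‖}`. Since `q` is super growth,
`N` is injective on `ℰ`, so `φ_N ω = N(ε)` forces `τ^N ω − ω = ε`. Points with finitely many
zeros form a null set.
-/

section BinaryValue

variable {a b ω : ℕ → Bool} {L M : ℕ}

def binVal (ω : ℕ → Bool) (M : ℕ) : ℕ := ∑ k ∈ Icc 1 M, (ω k).toNat * 2 ^ (k - 1)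

lemma binVal_succ (ω : ℕ → Bool) (M : ℕ) :
    binVal ω (M + 1) = binVal ω M + (ω (M + 1)).toNat * 2 ^ M := by
  rw [binVal, sum_Icc_succ_top (by omega), Nat.add_sub_cancel]
  rfl

lemma binVal_lt (ω : ℕ → Bool) : ∀ M, binVal ω M < 2 ^ M
  | 0 => by simp [binVal]
  | M + 1 => by
    have := binVal_lt ω M
    rw [binVal_succ, pow_succ]
    cases ω (M + 1) <;> simp <;> omega

lemma binVal_eq_zero (h : ∀ k ∈ Icc 1 M, ω k = false) : binVal ω M = 0 :=
  sum_eq_zero fun k hk => by simp [h k hk]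

lemma binVal_eq_two_pow_sub_one (h : ∀ k ∈ Icc 1 M, ω k = true) : binVal ω M = 2 ^ M - 1 := by
  induction M with
  | zero => simp [binVal]
  | succ M ih =>
    rw [binVal_succ, ih fun k hk => h k (by simp only [mem_Icc] at hk ⊢; omega),
      h (M + 1) (by simp), pow_succ]
    have := Nat.one_le_two_pow (n := M)
    simp only [Bool.toNat_true, one_mul]
    omega

lemma exists_false_of_binVal_add_one_lt (h : binVal ω M + 1 < 2 ^ M) :
    ∃ k ∈ Icc 1 M, ω k = false := by
  by_contra! hc
  have := binVal_eq_two_pow_sub_one fun k hk => by simpa using hc k hk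
  omega

lemma binVal_sub_binVal_of_eqOn (hLM : L ≤ M) (h : ∀ k, L < k → k ≤ M → a k = b k) :
    (binVal a M : ℤ) - binVal b M = binVal a L - binVal b L := by
  induction M, hLM using Nat.le_induction with
  | base => rfl
  | succ M hLM ih =>
    rw [binVal_succ, binVal_succ, h (M + 1) (by omega) le_rfl,
      ← ih fun k hk hkM => h k hk (by omega)]
    push_cast
    ring

lemma binVal_lt_binVal_of_top {t : ℕ} (ht : t ∈ Icc 1 M) (ha : a t = false) (hb : b t = true)
    (h : ∀ k, t < k → k ≤ M → a k = b k) : binVal a M < binVal b M := by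
  have key := binVal_sub_binVal_of_eqOn (mem_Icc.1 ht).2 fun k hk hkM => (h k hk hkM).symm
  obtain ⟨s, rfl⟩ : ∃ s, t = s + 1 := ⟨t - 1, by simp only [mem_Icc] at ht; omega⟩
  rw [binVal_succ, binVal_succ, ha, hb] at key
  have := binVal_lt a s
  simp only [Bool.toNat_false, Bool.toNat_true, zero_mul, one_mul, add_zero] at key
  omega

lemma eqOn_of_binVal_eq (h : binVal a M = binVal b M) : ∀ k ∈ Icc 1 M, a k = b k := by
  induction M with
  | zero => simp
  | succ M ih =>
    rw [binVal_succ, binVal_succ] at h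
    have := binVal_lt a M
    have := binVal_lt b M
    have htop : a (M + 1) = b (M + 1) := by
      cases ha : a (M + 1) <;> cases hb : b (M + 1) <;> simp only [ha, hb] at h ⊢ <;> simp at h <;>
        omega
    rw [htop, Nat.add_right_cancel_iff] at h
    intro k hk
    rcases (show k ≤ M ∨ k = M + 1 by simp only [mem_Icc] at hk; omega) with hkM | rfl
    · exact ih h k (by simp only [mem_Icc] at hk ⊢; omega)
    · exact htop

end BinaryValue

section Odometer

variable {a b ω : ℕ → Bool} {k M N : ℕ}

lemma ell_spec (hk : 0 < k) (hωk : ω k = false) :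
    0 < ell ω ∧ ω (ell ω) = false ∧ ell ω ≤ k :=
  have h : ell ω ∈ {n | 1 ≤ n ∧ ω n = false} := Nat.sInf_mem ⟨k, hk, hωk⟩
  ⟨h.1, h.2, Nat.sInf_le ⟨hk, hωk⟩⟩

lemma eq_true_of_lt_ell (hk : 0 < k) (hkℓ : k < ell ω) : ω k = true := by
  by_contra h
  exact (Nat.sInf_le ⟨hk, by simpa using h⟩ : ell ω ≤ k).not_gt hkℓ

lemma odo_zero : odo ω 0 = ω 0 := rfl

lemma odo_of_lt_ell (hk : 0 < k) (hkℓ : k < ell ω) : odo ω k = false := by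
  simp [odo, hk.ne', hkℓ]

lemma odo_ell (hℓ : 0 < ell ω) : odo ω (ell ω) = true := by
  simp [odo, hℓ.ne']

lemma odo_of_ell_lt (hk : ell ω < k) : odo ω k = ω k := by
  simp [odo, (Nat.zero_le _).trans_lt hk |>.ne', hk.not_gt, hk.ne']

lemma odo_iterate_zero (ω : ℕ → Bool) (N : ℕ) : odo^[N] ω 0 = ω 0 := by
  induction N with
  | zero => rfl
  | succ N ih => rw [Function.iterate_succ_apply', odo_zero, ih]

lemma binVal_odo (hk : k ∈ Icc 1 M) (hωk : ω k = false) :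
    binVal (odo ω) M = binVal ω M + 1 ∧ ∀ j, M < j → odo ω j = ω j := by
  obtain ⟨hℓ, hωℓ, hℓk⟩ := ell_spec (by simp only [mem_Icc] at hk; omega) hωk
  have hℓM : ell ω ≤ M := hℓk.trans (mem_Icc.1 hk).2
  refine ⟨?_, fun j hj => odo_of_ell_lt (by omega)⟩
  have key := binVal_sub_binVal_of_eqOn (a := odo ω) (b := ω) hℓM fun j hj _ => odo_of_ell_lt hj
  obtain ⟨s, hs⟩ : ∃ s, ell ω = s + 1 := ⟨ell ω - 1, by omega⟩
  have hlow_odo : binVal (odo ω) s = 0 :=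
    binVal_eq_zero fun j hj => odo_of_lt_ell (mem_Icc.1 hj).1 (by simp only [mem_Icc] at hj; omega)
  have hlow : binVal ω s = 2 ^ s - 1 := binVal_eq_two_pow_sub_one fun j hj =>
    eq_true_of_lt_ell (mem_Icc.1 hj).1 (by simp only [mem_Icc] at hj; omega)
  rw [hs, binVal_succ, binVal_succ, ← hs, odo_ell hℓ, hωℓ, hlow_odo, hlow] at key
  have := Nat.one_le_two_pow (n := s)
  simp only [Bool.toNat_false, Bool.toNat_true, zero_mul, one_mul, add_zero, zero_add] at key
  omega

lemma binVal_odo_iterate (hv : binVal ω M + N < 2 ^ M) :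
    binVal (odo^[N] ω) M = binVal ω M + N ∧ ∀ j, M < j → odo^[N] ω j = ω j := by
  induction N with
  | zero => simp
  | succ N ih =>
    obtain ⟨hval, htail⟩ := ih (by omega)
    obtain ⟨k, hk, hωk⟩ := exists_false_of_binVal_add_one_lt (ω := odo^[N] ω) (M := M) (by omega)
    obtain ⟨hval', htail'⟩ := binVal_odo hk hωk
    rw [Function.iterate_succ_apply']
    exact ⟨by omega, fun j hj => (htail' j hj).trans (htail j hj)⟩

theorem exists_odo_iterate_eq (h0 : a 0 = b 0) (hM : ∀ k, M < k → a k = b k)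
    (hlt : binVal a M < binVal b M) : ∃ N, 1 ≤ N ∧ odo^[N] a = b := by
  have := binVal_lt b M
  obtain ⟨hval, htail⟩ :=
    binVal_odo_iterate (ω := a) (M := M) (N := binVal b M - binVal a M) (by omega)
  refine ⟨binVal b M - binVal a M, by omega, funext fun k => ?_⟩
  rcases Nat.eq_zero_or_pos k with rfl | hk
  · rw [odo_iterate_zero, h0]
  rcases le_or_gt k M with hkM | hkM
  · exact eqOn_of_binVal_eq (by omega) k (mem_Icc.2 ⟨hk, hkM⟩)
  · rw [htail k hkM, hM k hkM]

lemma infinite_zeros_odo (hω : {k | ω k = false}.Infinite) : {k | odo ω k = false}.Infinite :=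
  (hω.sdiff (Set.finite_Iic (ell ω))).mono fun k hk => by
    simpa [odo_of_ell_lt (not_le.1 hk.2)] using hk.1

lemma infinite_zeros_odo_iterate (hω : {k | ω k = false}.Infinite) (N : ℕ) :
    {k | odo^[N] ω k = false}.Infinite := by
  induction N with
  | zero => exact hω
  | succ N ih => simpa only [Function.iterate_succ_apply'] using infinite_zeros_odo ih

lemma exists_binVal_add_lt (hω : {k | ω k = false}.Infinite) (N : ℕ) :
    ∃ M, binVal ω M + N < 2 ^ M := by
  obtain ⟨M, hM, hNM⟩ := hω.exists_gt N
  obtain ⟨s, rfl⟩ : ∃ s, M = s + 1 := ⟨M - 1, by omega⟩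
  refine ⟨s + 1, ?_⟩
  rw [binVal_succ, show ω (s + 1) = false from hM, pow_succ]
  have := binVal_lt ω s
  have := Nat.lt_two_pow_self (n := s)
  simp only [Bool.toNat_false, zero_mul, add_zero]
  omega

end Odometer

lemma support_subset_Icc {α : Type*} [Zero α] {f : ℕ → α} {M : ℕ} (h0 : f 0 = 0)
    (hM : ∀ k, M < k → f k = 0) : Function.support f ⊆ Icc 1 M := by
  intro k hk
  rw [coe_Icc, Set.mem_Icc]
  by_contra hk'
  rcases Nat.eq_zero_or_pos k with rfl | hk0
  · exact hk h0
  · exact hk (hM k (by omega))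

section Nval

variable {q : ℕ → ℕ} {ε ε' : ℕ → ℤ} {M : ℕ}

lemma nval_eq_sum_Icc (h0 : ε 0 = 0) (hM : ∀ k, M < k → ε k = 0) :
    Nval q ε = ∑ k ∈ Icc 1 M, ε k * q k :=
  finsum_eq_finsetSum_of_support_subset _
    ((Function.support_mul_subset_left _ _).trans (support_subset_Icc h0 hM))

lemma nval_add (hε : (Function.support ε).Finite) (hε' : (Function.support ε').Finite) :
    Nval q (ε + ε') = Nval q ε + Nval q ε' := by
  simp only [Nval, Pi.add_apply, add_mul]
  exact finsum_add_distrib (hε.subset (Function.support_mul_subset_left _ _))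
    (hε'.subset (Function.support_mul_subset_left _ _))

lemma IsEps.abs_le_one (hε : IsEps ε) (k : ℕ) : |ε k| ≤ 1 := by
  rcases hε.2.1 k with h | h | h <;> simp [h]

lemma IsEps.eq_zero_of_kap_lt (hε : IsEps ε) {k : ℕ} (hk : kap ε < k) : ε k = 0 :=
  Function.notMem_support.1 fun h => (le_csSup hε.2.2.bddAbove h).not_gt hk

/-- Super growth makes the top nonzero term dominate: `|δ t| q t ≥ q t > 2 ∑_{k<t} q k`. -/
lemma eq_zero_of_sum_Icc_eq_zero (hq : IsSuperGrowth q) {δ : ℕ → ℤ} (hδ : ∀ k, |δ k| ≤ 2) :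
    ∀ t, ∑ k ∈ Icc 1 t, δ k * q k = 0 → ∀ k ∈ Icc 1 t, δ k = 0
  | 0, _ => by simp
  | t + 1, hsum => by
    rw [sum_Icc_succ_top (by omega)] at hsum
    have hlow : |∑ k ∈ Icc 1 t, δ k * q k| < q (t + 1) := calc
      _ ≤ ∑ k ∈ Icc 1 t, |δ k * q k| := abs_sum_le_sum_abs _ _
      _ ≤ ∑ k ∈ Icc 1 t, 2 * (q k : ℤ) := sum_le_sum fun k _ => by
        rw [abs_mul, Nat.abs_cast]
        exact mul_le_mul_of_nonneg_right (hδ k) (by positivity)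
      _ = 2 * ∑ k ∈ Icc 1 t, (q k : ℤ) := (mul_sum _ _ _).symm
      _ < q (t + 1) := by exact_mod_cast (by simpa using hq.2.2 (t + 1) (by omega))
    have htop : δ (t + 1) = 0 := by
      by_contra h
      have : (q (t + 1) : ℤ) ≤ |δ (t + 1) * q (t + 1)| := by
        rw [abs_mul, Nat.abs_cast]
        exact le_mul_of_one_le_left (by positivity) (Int.one_le_abs h)
      rw [eq_neg_of_add_eq_zero_right hsum, abs_neg] at this
      linarith
    rw [htop, zero_mul, add_zero] at hsum
    intro k hk
    rcases (show k ≤ t ∨ k = t + 1 by simp only [mem_Icc] at hk; omega) with hkt | rfl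
    · exact eq_zero_of_sum_Icc_eq_zero hq hδ t hsum k (by simp only [mem_Icc] at hk ⊢; omega)
    · exact htop

theorem eq_of_nval_eq (hq : IsSuperGrowth q) (hε : IsEps ε) (hε' : IsEps ε')
    (h : Nval q ε = Nval q ε') : ε = ε' := by
  obtain ⟨M, hM⟩ := (hε.2.2.union hε'.2.2).bddAbove
  have hout : ∀ k, M < k → ε k = 0 ∧ ε' k = 0 := fun k hk =>
    ⟨Function.notMem_support.1 fun h => (hM (Or.inl h)).not_gt hk,
      Function.notMem_support.1 fun h => (hM (Or.inr h)).not_gt hk⟩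
  rw [nval_eq_sum_Icc hε.1 fun k hk => (hout k hk).1,
    nval_eq_sum_Icc hε'.1 fun k hk => (hout k hk).2] at h
  have hδ := eq_zero_of_sum_Icc_eq_zero hq (δ := ε - ε')
    (fun k => (abs_sub _ _).trans (by linarith [hε.abs_le_one k, hε'.abs_le_one k])) M
    (by simp only [Pi.sub_apply, sub_mul, sum_sub_distrib, h, sub_self])
  funext k
  rcases Nat.eq_zero_or_pos k with rfl | hk
  · rw [hε.1, hε'.1]
  rcases le_or_gt k M with hkM | hkM
  · exact sub_eq_zero.1 (hδ k (mem_Icc.2 ⟨hk, hkM⟩))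
  · rw [(hout k hkM).1, (hout k hkM).2]

end Nval

section CoordDiff

def coordDiff (a b : ℕ → Bool) (k : ℕ) : ℤ := (b k).toNat - (a k).toNat

variable {q : ℕ → ℕ} {a b ω : ℕ → Bool} {k M N : ℕ}

lemma coordDiff_add_coordDiff (a b c : ℕ → Bool) :
    coordDiff a b + coordDiff b c = coordDiff a c := by
  funext k
  simp only [Pi.add_apply, coordDiff]
  ring

lemma coordDiff_eq_zero_iff : coordDiff a b k = 0 ↔ a k = b k := by
  unfold coordDiff; cases a k <;> cases b k <;> simp

lemma coordDiff_eq_neg_one_iff : coordDiff a b k = -1 ↔ a k = true ∧ b k = false := by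
  unfold coordDiff; cases a k <;> cases b k <;> simp

lemma coordDiff_trichotomy (a b : ℕ → Bool) (k : ℕ) :
    coordDiff a b k = -1 ∨ coordDiff a b k = 0 ∨ coordDiff a b k = 1 := by
  unfold coordDiff; cases a k <;> cases b k <;> simp

lemma eq_decide_of_coordDiff_ne_zero (h : coordDiff a b k ≠ 0) :
    a k = decide (coordDiff a b k = -1) := by
  revert h; unfold coordDiff; cases a k <;> cases b k <;> simp

lemma support_coordDiff_subset (h0 : a 0 = b 0) (hM : ∀ k, M < k → a k = b k) :
    Function.support (coordDiff a b) ⊆ Icc 1 M :=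
  support_subset_Icc (coordDiff_eq_zero_iff.2 h0) fun k hk => coordDiff_eq_zero_iff.2 (hM k hk)

lemma support_coordDiff_odo_subset (ω : ℕ → Bool) :
    Function.support (coordDiff ω (odo ω)) ⊆ Icc 1 (ell ω) :=
  support_coordDiff_subset odo_zero.symm fun _ hk => (odo_of_ell_lt hk).symm

theorem isEplus_coordDiff (h0 : a 0 = b 0) (hM : ∀ k, M < k → a k = b k)
    (hlt : binVal a M < binVal b M) : IsEplus (coordDiff a b) := by
  have hsupp := support_coordDiff_subset h0 hM
  have hε : IsEps (coordDiff a b) :=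
    ⟨coordDiff_eq_zero_iff.2 h0, coordDiff_trichotomy a b, (Icc 1 M).finite_toSet.subset hsupp⟩
  have hne : coordDiff a b ≠ 0 := fun h => by
    rw [show a = b from funext fun k => coordDiff_eq_zero_iff.1 (congrFun h k)] at hlt
    exact hlt.false
  have hκ : kap (coordDiff a b) ∈ Function.support (coordDiff a b) :=
    Nat.sSup_mem (Function.support_nonempty_iff.2 hne) hε.2.2.bddAbove
  refine ⟨hε, hne, ?_⟩
  rcases coordDiff_trichotomy a b (kap (coordDiff a b)) with h | h | h
  · obtain ⟨ha, hb⟩ := coordDiff_eq_neg_one_iff.1 h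
    exact absurd hlt (binVal_lt_binVal_of_top (hsupp hκ) hb ha fun k hk _ =>
      (coordDiff_eq_zero_iff.1 (hε.eq_zero_of_kap_lt hk)).symm).not_gt
  · exact absurd h hκ
  · exact h

lemma phi_eq_nval_coordDiff (hk : 0 < k) (hωk : ω k = false) :
    phi q ω = Nval q (coordDiff ω (odo ω)) := by
  obtain ⟨hℓ, hωℓ, -⟩ := ell_spec hk hωk
  obtain ⟨s, hs⟩ : ∃ s, ell ω = s + 1 := ⟨ell ω - 1, by omega⟩
  have hlow : ∀ j ∈ Icc 1 s, coordDiff ω (odo ω) j * q j = -q j := fun j hj => by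
    simp only [mem_Icc] at hj
    rw [coordDiff, odo_of_lt_ell (by omega) (by omega),
      eq_true_of_lt_ell (ω := ω) (by omega) (by omega)]
    simp
  rw [Nval, finsum_eq_finsetSum_of_support_subset _ ((Function.support_mul_subset_left _ _).trans
    (support_coordDiff_odo_subset ω)), phi, hs, sum_Icc_succ_top (by omega), Nat.add_sub_cancel,
    sum_congr rfl hlow, ← hs, coordDiff, odo_ell hℓ, hωℓ, sum_neg_distrib]
  simp only [Bool.toNat_true, Bool.toNat_false]
  push_cast
  ring

theorem phiN_eq_nval_coordDiff (hω : {k | ω k = false}.Infinite) (N : ℕ) :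
    phiN q N ω = Nval q (coordDiff ω (odo^[N] ω)) := by
  induction N with
  | zero => simp [phiN, coordDiff, Nval]
  | succ N ih =>
    obtain ⟨M, hM⟩ := exists_binVal_add_lt hω N
    obtain ⟨k, hσk, hk⟩ := (infinite_zeros_odo_iterate hω N).exists_gt 0
    have hfin : (Function.support (coordDiff ω (odo^[N] ω))).Finite :=
      (Icc 1 M).finite_toSet.subset <| support_coordDiff_subset (odo_iterate_zero ω N).symm
        fun j hj => ((binVal_odo_iterate hM).2 j hj).symm
    have hfin' := (Icc 1 _).finite_toSet.subset (support_coordDiff_odo_subset (odo^[N] ω))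
    rw [phiN, sum_range_succ, ← phiN, ih, phi_eq_nval_coordDiff hk hσk, ← nval_add hfin hfin',
      coordDiff_add_coordDiff, Function.iterate_succ_apply']

theorem isEplus_coordDiff_odo_iterate (hω : {k | ω k = false}.Infinite) (hN : 1 ≤ N) :
    IsEplus (coordDiff ω (odo^[N] ω)) := by
  obtain ⟨M, hM⟩ := exists_binVal_add_lt hω N
  obtain ⟨hval, htail⟩ := binVal_odo_iterate hM
  exact isEplus_coordDiff (odo_iterate_zero ω N).symm (fun k hk => (htail k hk).symm) (by omega)

end CoordDiff

section Cylinder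

variable {q : ℕ → ℕ} {ε : ℕ → ℤ} {ω : ℕ → Bool}

/-- The points `ω` for which `ω + ε` is again a `{0,1}`-sequence. -/
def epsCylinder (ε : ℕ → ℤ) : Set (ℕ → Bool) := {ω | ∀ k, ε k ≠ 0 → ω k = decide (ε k = -1)}

lemma normE_eq_card (hε : IsEps ε) : normE ε = hε.2.2.toFinset.card := by
  rw [normE, finsum_eq_finsetSum_of_support_subset _ (s := hε.2.2.toFinset) fun k hk => by
    simpa using hk, card_eq_sum_ones]
  refine sum_congr rfl fun k hk => ?_
  rcases hε.2.1 k with h | h | h <;> simp_all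

lemma measure_epsCylinder {P : Measure (ℕ → Bool)}
    (hP : ∀ (s : Finset ℕ) (v : ℕ → Bool),
      P {ω : ℕ → Bool | ∀ i ∈ s, ω i = v i} = (1 / 2 : ENNReal) ^ s.card)
    (hε : IsEps ε) : P (epsCylinder ε) = (1 / 2 : ENNReal) ^ normE ε := by
  rw [normE_eq_card hε, ← hP hε.2.2.toFinset fun k => decide (ε k = -1)]
  simp [epsCylinder]

lemma exists_phiN_eq_nval_of_mem_epsCylinder (hε : IsEplus ε)
    (hω : {k | ω k = false}.Infinite) (hC : ω ∈ epsCylinder ε) :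
    ∃ N, 1 ≤ N ∧ phiN q N ω = Nval q ε := by
  set ω' : ℕ → Bool := fun k => if ε k = 0 then ω k else !ω k
  have hdiff : coordDiff ω ω' = ε := funext fun k => by
    by_cases h : ε k = 0
    · simp [ω', h, coordDiff]
    · have := hC k h
      rcases hε.1.2.1 k with h' | h' | h' <;> simp_all [ω', coordDiff]
  have hκ : ε (kap ε) = 1 := hε.2.2
  have hκ0 : 0 < kap ε := Nat.pos_of_ne_zero fun h => by simp [h, hε.1.1] at hκ
  have habove : ∀ k, kap ε < k → ω k = ω' k := fun k hk => by
    simp [ω', hε.1.eq_zero_of_kap_lt hk]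
  have hωκ : ω (kap ε) = false := by simpa [hκ] using hC (kap ε) (hκ ▸ one_ne_zero)
  obtain ⟨N, hN, hNω⟩ := exists_odo_iterate_eq (M := kap ε) (by simp [ω', hε.1.1])
    habove (binVal_lt_binVal_of_top (mem_Icc.2 ⟨hκ0, le_rfl⟩) hωκ (by simp [ω', hκ, hωκ])
      fun k hk _ => habove k hk)
  exact ⟨N, hN, by rw [phiN_eq_nval_coordDiff hω, hNω, hdiff]⟩

theorem exists_phiN_eq_nval_iff (hq : IsSuperGrowth q) (hε : IsEplus ε)
    (hω : {k | ω k = false}.Infinite) :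
    (∃ N, 1 ≤ N ∧ phiN q N ω = Nval q ε) ↔ ω ∈ epsCylinder ε := by
  refine ⟨fun ⟨N, hN, h⟩ k hk => ?_, exists_phiN_eq_nval_of_mem_epsCylinder hε hω⟩
  rw [phiN_eq_nval_coordDiff hω] at h
  rw [← eq_of_nval_eq hq (isEplus_coordDiff_odo_iterate hω hN).1 hε.1 h] at hk ⊢
  exact eq_decide_of_coordDiff_ne_zero hk

end Cylinder

lemma ae_infinite_zeros {P : Measure (ℕ → Bool)}
    (hP : ∀ (s : Finset ℕ) (v : ℕ → Bool),
      P {ω : ℕ → Bool | ∀ i ∈ s, ω i = v i} = (1 / 2 : ENNReal) ^ s.card) :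
    ∀ᵐ ω ∂P, {k | ω k = false}.Infinite := by
  simp only [ae_iff, Set.not_infinite]
  have hsub : {ω : ℕ → Bool | {k | ω k = false}.Finite} ⊆
      ⋃ m, {ω | ∀ k, m < k → ω k = true} := fun ω hω => by
    obtain ⟨m, hm⟩ := hω.bddAbove
    exact Set.mem_iUnion.2 ⟨m, fun k hk => by
      by_contra h
      exact (hm (by simpa using h)).not_gt hk⟩
  refine measure_mono_null hsub (measure_iUnion_null fun m => le_antisymm ?_ zero_le)
  refine ge_of_tendsto' (ENNReal.tendsto_pow_atTop_nhds_zero_of_lt_one (r := 1 / 2) (by norm_num))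
    fun j => ?_
  calc P {ω | ∀ k, m < k → ω k = true}
      ≤ P {ω | ∀ i ∈ Icc (m + 1) (m + j), ω i = (fun _ => true) i} :=
        measure_mono fun ω hω i hi => hω i (by simp only [mem_Icc] at hi; omega)
    _ = (1 / 2) ^ j := by rw [hP, Nat.card_Icc]; congr 1; omega

theorem stmt1_general (q : ℕ → ℕ) (hq : IsSuperGrowth q)
    (P : Measure (ℕ → Bool))
    (hP : ∀ (s : Finset ℕ) (v : ℕ → Bool),
      P {ω : ℕ → Bool | ∀ i ∈ s, ω i = v i} = (1 / 2 : ENNReal) ^ s.card) :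
    (∀ ε : ℕ → ℤ, IsEplus ε →
      P {ω : ℕ → Bool | ∃ N : ℕ, 1 ≤ N ∧ (phiN q N ω : ℤ) = Nval q ε}
        = (1 / 2 : ENNReal) ^ normE ε) ∧
    (∀ n : ℤ, 1 ≤ n → (∀ ε : ℕ → ℤ, IsEplus ε → Nval q ε ≠ n) →
      P {ω : ℕ → Bool | ∃ N : ℕ, 1 ≤ N ∧ phiN q N ω = n} = 0) := by
  have hae := ae_infinite_zeros hP
  refine ⟨fun ε hε => ?_, fun n _ hn => ?_⟩
  · rw [← measure_epsCylinder hP hε.1]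
    exact measure_congr <| Filter.eventuallyEq_set.2 <|
      hae.mono fun ω hω => exists_phiN_eq_nval_iff hq hε hω
  · refine measure_eq_zero_iff_ae_notMem.2 <| hae.mono fun ω hω ⟨N, hN, h⟩ =>
      hn _ (isEplus_coordDiff_odo_iterate hω hN) ?_
    rw [← h, phiN_eq_nval_coordDiff hω]

/-- Let `q` be a super growth sequence, `φ` the associated dyadic
cocycle over the dyadic odometer on `Ω = {0,1}^{ℕ≥1}` and `P` the Bernoulli(1/2) product
measure (characterized by its values on cylinder sets). For every integer `n ≥ 1`: if
`n = N(ε)` with `ε ∈ ℰ⁺` then `P{ω : ∃ N ≥ 1, φ_N ω = n} = 2^{−‖ε‖}`, and if `n` is not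
of this form then `P{ω : ∃ N ≥ 1, φ_N ω = n} = 0`. -/
theorem stmt1 (q : ℕ → ℕ) (hq : IsSuperGrowth q)
    (P : Measure (ℕ → Bool)) (hPprob : IsProbabilityMeasure P)
    (hP : ∀ (s : Finset ℕ) (v : ℕ → Bool),
      P {ω : ℕ → Bool | ∀ i ∈ s, ω i = v i} = (1 / 2 : ENNReal) ^ s.card) :
    (∀ ε : ℕ → ℤ, IsEplus ε →
      P {ω : ℕ → Bool | ∃ N : ℕ, 1 ≤ N ∧ (phiN q N ω : ℤ) = Nval q ε}
        = (1 / 2 : ENNReal) ^ normE ε) ∧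
    (∀ n : ℤ, 1 ≤ n → (∀ ε : ℕ → ℤ, IsEplus ε → Nval q ε ≠ n) →
      P {ω : ℕ → Bool | ∃ N : ℕ, 1 ≤ N ∧ phiN q N ω = n} = 0) :=
  stmt1_general q hq P hP
end

section
/- Let q be a super growth sequence and define u : ℕ≥1 → ℝ by u(n) = 2^{−‖ε‖} if n = N(ε) for some ε ∈ ℰ⁺, and u(n) = 0 otherwise (this is well defined since ε ↦ N(ε) is injective). Let c(n) = min{k ≥ 1 : q(k) ≥ n}. Then liminf_{n→∞} 2^{−c(n)} ∑_{k=1}^{n} |u(k) − u(k + q(1))| > 0. -/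
open Finset

namespace S2


/-! ### basic q lemmas -/

lemma q_mono {q : ℕ → ℕ} (hq : IsSuperGrowth q) {a b : ℕ} (ha : 1 ≤ a) (hab : a ≤ b) :
    q a ≤ q b := by
  rcases eq_or_lt_of_le hab with rfl | h
  · exact le_rfl
  · exact (hq.2.1 a b ha h).le

lemma self_le_q {q : ℕ → ℕ} (hq : IsSuperGrowth q) : ∀ n, 1 ≤ n → n ≤ q n := by
  intro n hn
  induction n with
  | zero => omega
  | succ m ih =>
    rcases Nat.eq_or_lt_of_le hn with h | h
    · have hm0 : m = 0 := by omega
      subst hm0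
      exact hq.1 1 le_rfl
    · have hm : 1 ≤ m := by omega
      have := ih hm
      have := hq.2.1 m (m+1) hm (by omega)
      omega

lemma cIdx_spec {q : ℕ → ℕ} (hq : IsSuperGrowth q) (n : ℕ) :
    1 ≤ cIdx q n ∧ n ≤ q (cIdx q n) := by
  have hne : {k | 1 ≤ k ∧ n ≤ q k}.Nonempty := by
    refine ⟨max 1 n, le_max_left _ _, ?_⟩
    calc n ≤ max 1 n := le_max_right _ _
    _ ≤ q (max 1 n) := self_le_q hq _ (le_max_left _ _)
  exact Nat.sInf_mem hne

lemma cIdx_le {q : ℕ → ℕ} {n k : ℕ} (hk : 1 ≤ k) (h : n ≤ q k) : cIdx q n ≤ k :=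
  Nat.sInf_le ⟨hk, h⟩

lemma lt_cIdx {q : ℕ → ℕ} (hq : IsSuperGrowth q) {n k : ℕ} (hk : 1 ≤ k) (h : q k < n) :
    k < cIdx q n := by
  by_contra hc
  push_neg at hc
  have h2 := (cIdx_spec hq n).2
  have h1 := (cIdx_spec hq n).1
  have := q_mono hq h1 hc
  omega

/-! ### kap lemmas -/

lemma kap_eq {ε : ℕ → ℤ} {m : ℕ} (h1 : ε m ≠ 0) (h2 : ∀ k, ε k ≠ 0 → k ≤ m) :
    kap ε = m := by
  unfold kap
  apply le_antisymm
  · exact csSup_le ⟨m, h1⟩ h2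
  · exact le_csSup ⟨m, fun k hk => h2 k hk⟩ h1

lemma eps_zero_of_gt {ε : ℕ → ℤ} (hfin : (Function.support ε).Finite) {k : ℕ}
    (h : kap ε < k) : ε k = 0 := by
  by_contra hc
  have : k ≤ kap ε := le_csSup hfin.bddAbove hc
  omega


noncomputable local instance : DecidableEq (ℕ → ℤ) := Classical.decEq _

/-- Extend a pi-type function on a finset to a total function (zero outside). -/
def extF (s : Finset ℕ) (p : ∀ k ∈ s, ℤ) : ℕ → ℤ :=
  fun k => if h : k ∈ s then p k h else 0

/-- The finset of functions `ℕ → ℤ` supported on `s` with values in `{-1,0,1}`. -/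
noncomputable def G (s : Finset ℕ) : Finset (ℕ → ℤ) :=
  (s.pi fun _ => ({-1, 0, 1} : Finset ℤ)).image (extF s)

lemma extF_injOn (s : Finset ℕ) : ∀ p ∈ s.pi fun _ => ({-1,0,1} : Finset ℤ),
    ∀ p' ∈ s.pi fun _ => ({-1,0,1} : Finset ℤ), extF s p = extF s p' → p = p' := by
  intro p _ p' _ h
  funext k hk
  have := congrFun h k
  simpa [extF, hk] using this

lemma mem_G_of {s : Finset ℕ} {σ : ℕ → ℤ}
    (h1 : ∀ k ∈ s, σ k = -1 ∨ σ k = 0 ∨ σ k = 1) (h2 : ∀ k, k ∉ s → σ k = 0) :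
    σ ∈ G s := by
  refine Finset.mem_image.2 ⟨fun k _ => σ k, ?_, ?_⟩
  · rw [Finset.mem_pi]
    intro k hk
    rcases h1 k hk with h | h | h <;> simp [h]
  · funext k
    by_cases hk : k ∈ s <;> simp [extF, hk, h2]

lemma of_mem_G {s : Finset ℕ} {σ : ℕ → ℤ} (h : σ ∈ G s) :
    (∀ k ∈ s, σ k = -1 ∨ σ k = 0 ∨ σ k = 1) ∧ ∀ k, k ∉ s → σ k = 0 := by
  rcases Finset.mem_image.1 h with ⟨p, hp, rfl⟩
  rw [Finset.mem_pi] at hp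
  constructor
  · intro k hk
    have := hp k hk
    simp only [Finset.mem_insert, Finset.mem_singleton] at this
    simpa [extF, hk] using this
  · intro k hk
    simp [extF, hk]

lemma sum_G (s : Finset ℕ) :
    ∑ σ ∈ G s, ((1:ℝ)/2) ^ (∑ k ∈ s, (σ k).natAbs) = 2 ^ s.card := by
  unfold G
  rw [Finset.sum_image (extF_injOn s)]
  have key : ∀ p ∈ s.pi fun _ => ({-1,0,1} : Finset ℤ),
      ((1:ℝ)/2) ^ (∑ k ∈ s, ((extF s p k).natAbs)) =
        ∏ x ∈ s.attach, ((1:ℝ)/2) ^ (p x.1 x.2).natAbs := by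
    intro p hp
    rw [← Finset.prod_pow_eq_pow_sum]
    rw [← Finset.prod_attach s fun k => ((1:ℝ)/2) ^ (extF s p k).natAbs]
    refine Finset.prod_congr rfl ?_
    intro x _
    simp [extF, x.2]
  rw [Finset.sum_congr rfl key]
  have h2 : ∀ k ∈ s, (∑ b ∈ ({-1,0,1} : Finset ℤ), ((1:ℝ)/2) ^ b.natAbs) = 2 := by
    intro k _
    norm_num
  calc ∑ p ∈ s.pi fun _ => ({-1,0,1} : Finset ℤ), ∏ x ∈ s.attach, ((1:ℝ)/2) ^ (p x.1 x.2).natAbs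
      = ∏ k ∈ s, ∑ b ∈ ({-1,0,1} : Finset ℤ), ((1:ℝ)/2) ^ b.natAbs :=
        (Finset.prod_sum s (fun _ => ({-1,0,1} : Finset ℤ)) (fun _ b => ((1:ℝ)/2) ^ b.natAbs)).symm
    _ = 2 ^ s.card := by rw [Finset.prod_congr rfl h2, Finset.prod_const]

/-- Uniqueness of representations: super-growth forces small-coefficient relations to vanish. -/
lemma uniq {q : ℕ → ℕ} (hq : IsSuperGrowth q) :
    ∀ M : ℕ, ∀ δ : ℕ → ℤ, (∀ k, |δ k| ≤ 2) →
      (∑ k ∈ Icc 1 M, δ k * (q k : ℤ)) = 0 → ∀ k ∈ Icc 1 M, δ k = 0 := by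
  intro M
  induction M with
  | zero => intro δ _ _ k hk; simp at hk
  | succ M ih =>
    intro δ hb hsum k hk
    have hsplit : ∑ k ∈ Icc 1 (M+1), δ k * (q k : ℤ)
        = ∑ k ∈ Icc 1 M, δ k * (q k : ℤ) + δ (M+1) * (q (M+1) : ℤ) :=
      Finset.sum_Icc_succ_top (by omega) _
    have habs : |∑ k ∈ Icc 1 M, δ k * (q k : ℤ)| ≤ 2 * ∑ k ∈ Icc 1 M, (q k : ℤ) := by
      calc |∑ k ∈ Icc 1 M, δ k * (q k : ℤ)| ≤ ∑ k ∈ Icc 1 M, |δ k * (q k : ℤ)| :=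
            Finset.abs_sum_le_sum_abs _ _
      _ ≤ ∑ k ∈ Icc 1 M, 2 * (q k : ℤ) := by
            refine Finset.sum_le_sum ?_
            intro i _
            rw [abs_mul, abs_of_nonneg (by positivity : (0:ℤ) ≤ (q i : ℤ))]
            exact mul_le_mul_of_nonneg_right (hb i) (by positivity)
      _ = 2 * ∑ k ∈ Icc 1 M, (q k : ℤ) := by rw [Finset.mul_sum]
    have hlt : 2 * ∑ k ∈ Icc 1 M, (q k : ℤ) < (q (M+1) : ℤ) := by
      have := hq.2.2 (M+1) (by omega)
      simp only [Nat.add_sub_cancel] at this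
      push_cast [← Nat.cast_sum]
      exact_mod_cast this
    have hδtop : δ (M+1) = 0 := by
      by_contra hne
      have h1 : 1 ≤ |δ (M+1)| := by
        rcases lt_or_gt_of_ne hne with h | h
        · rw [abs_of_neg h]; omega
        · rw [abs_of_pos h]; omega
      have hqpos : (0:ℤ) < (q (M+1) : ℤ) := by exact_mod_cast hq.1 (M+1) (by omega)
      have : (q (M+1) : ℤ) ≤ |δ (M+1) * (q (M+1) : ℤ)| := by
        rw [abs_mul, abs_of_nonneg hqpos.le]
        nlinarith
      have heq : δ (M+1) * (q (M+1) : ℤ) = -∑ k ∈ Icc 1 M, δ k * (q k : ℤ) := by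
        rw [hsplit] at hsum; linarith
      rw [heq, abs_neg] at this
      linarith
    rcases Finset.mem_Icc.1 hk with ⟨hk1, hk2⟩
    rcases Nat.eq_or_lt_of_le hk2 with h | h
    · rw [h]; exact hδtop
    · refine ih δ hb ?_ k (Finset.mem_Icc.2 ⟨hk1, by omega⟩)
      rw [hsplit, hδtop] at hsum
      simpa using hsum



lemma Nval_eq_sum (q : ℕ → ℕ) {ε : ℕ → ℤ} {s : Finset ℕ}
    (hs : Function.support ε ⊆ ↑s) :
    Nval q ε = ∑ k ∈ s, ε k * (q k : ℤ) := by
  refine finsum_eq_finset_sum_of_support_subset _ ?_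
  intro k hk
  rw [Function.mem_support] at hk
  apply hs
  rw [Function.mem_support]
  intro h0
  rw [h0] at hk
  simp at hk

lemma normE_eq_sum {ε : ℕ → ℤ} {s : Finset ℕ} (hs : Function.support ε ⊆ ↑s) :
    normE ε = ∑ k ∈ s, (ε k).natAbs := by
  refine finsum_eq_finset_sum_of_support_subset _ ?_
  intro k hk
  apply hs
  intro h
  rw [Function.mem_support] at hk
  simp [h] at hk

lemma supp_subset_Icc {ε : ℕ → ℤ} (h : IsEplus ε) :
    Function.support ε ⊆ ↑(Icc 1 (kap ε)) := by
  intro k hk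
  rw [Function.mem_support] at hk
  have h1 : k ≠ 0 := fun h0 => hk (h0 ▸ h.1.1)
  have h2 : k ≤ kap ε := le_csSup h.1.2.2.bddAbove hk
  simp [Finset.mem_Icc]
  omega

lemma abs_comb_le (q : ℕ → ℕ) (δ : ℕ → ℤ) (s : Finset ℕ) (hb : ∀ k, |δ k| ≤ 1) :
    |∑ k ∈ s, δ k * (q k : ℤ)| ≤ ∑ k ∈ s, (q k : ℤ) := by
  calc |∑ k ∈ s, δ k * (q k : ℤ)| ≤ ∑ k ∈ s, |δ k * (q k : ℤ)| :=
        Finset.abs_sum_le_sum_abs _ _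
  _ ≤ ∑ k ∈ s, (q k : ℤ) := by
      refine Finset.sum_le_sum ?_
      intro i _
      rw [abs_mul, abs_of_nonneg (by positivity : (0:ℤ) ≤ (q i : ℤ))]
      nlinarith [hb i, abs_nonneg (δ i), (by positivity : (0:ℤ) ≤ (q i : ℤ))]

lemma kap_pos {ε : ℕ → ℤ} (h : IsEplus ε) : 1 ≤ kap ε := by
  by_contra hc
  have h0 : kap ε = 0 := by omega
  have := h.2.2
  rw [h0, h.1.1] at this
  exact one_ne_zero this.symm

lemma q_kap_lt_two_Nval {q : ℕ → ℕ} (hq : IsSuperGrowth q) {ε : ℕ → ℤ} (h : IsEplus ε) :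
    (q (kap ε) : ℤ) < 2 * Nval q ε := by
  set j := kap ε with hj
  have hj1 : 1 ≤ j := kap_pos h
  have hrepr : Nval q ε = ∑ k ∈ Icc 1 j, ε k * (q k : ℤ) := Nval_eq_sum q (supp_subset_Icc h)
  have hsplit : ∑ k ∈ Icc 1 j, ε k * (q k : ℤ)
      = ∑ k ∈ Icc 1 (j-1), ε k * (q k : ℤ) + ε j * (q j : ℤ) := by
    have hj' : j = (j - 1) + 1 := by omega
    rw [hj']
    rw [Finset.sum_Icc_succ_top (by omega) _]
    rw [← hj']
  have hb : ∀ k, |ε k| ≤ 1 := by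
    intro k
    rcases h.1.2.1 k with h' | h' | h' <;> simp [h']
  have habs := abs_comb_le q ε (Icc 1 (j-1)) hb
  have hlt : 2 * ∑ k ∈ Icc 1 (j-1), (q k : ℤ) < (q j : ℤ) := by
    have := hq.2.2 j hj1
    push_cast [← Nat.cast_sum]
    exact_mod_cast this
  have hεj : ε j = 1 := h.2.2
  rw [hrepr, hsplit, hεj]
  have := abs_le.1 habs
  linarith

lemma Nval_pos {q : ℕ → ℕ} (hq : IsSuperGrowth q) {ε : ℕ → ℤ} (h : IsEplus ε) :
    1 ≤ Nval q ε := by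
  have h1 := q_kap_lt_two_Nval hq h
  have h2 : 0 < q (kap ε) := hq.1 _ (kap_pos h)
  have : (0:ℤ) < (q (kap ε) : ℤ) := by exact_mod_cast h2
  omega


/-! ### the lower-bound family -/

def e0 (m : ℕ) (σ : ℕ → ℤ) : ℕ → ℤ := fun k => if k = m then 1 else σ k
def e1 (m : ℕ) (σ : ℕ → ℤ) : ℕ → ℤ := fun k => if k = 1 then 1 else e0 m σ k

section family

variable {q : ℕ → ℕ} {m : ℕ} {σ : ℕ → ℤ}

lemma e0_supp (hm : 2 ≤ m) (hσ : σ ∈ G (Icc 2 (m-1))) :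
    ∀ k, e0 m σ k ≠ 0 → 2 ≤ k ∧ k ≤ m := by
  intro k hk
  unfold e0 at hk
  by_cases h : k = m
  · omega
  · rw [if_neg h] at hk
    have := (of_mem_G hσ).2 k
    by_cases h2 : k ∈ Icc 2 (m-1)
    · rcases Finset.mem_Icc.1 h2 with ⟨a, b⟩; omega
    · exact absurd (this h2) hk

lemma e0_plus (hm : 2 ≤ m) (hσ : σ ∈ G (Icc 2 (m-1))) :
    IsEplus (e0 m σ) ∧ kap (e0 m σ) = m := by
  have hsupp := e0_supp hm hσ
  have hm1 : e0 m σ m = 1 := by simp [e0]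
  have hkap : kap (e0 m σ) = m := kap_eq (by rw [hm1]; norm_num) (fun k hk => (hsupp k hk).2)
  refine ⟨⟨⟨?_, ?_, ?_⟩, ?_, ?_⟩, hkap⟩
  · by_contra h
    have := hsupp 0 h
    omega
  · intro k
    by_cases h : k = m
    · subst h; rw [hm1]; tauto
    · have he : e0 m σ k = σ k := by unfold e0; rw [if_neg h]
      rw [he]
      by_cases h2 : k ∈ Icc 2 (m-1)
      · exact (of_mem_G hσ).1 k h2
      · rw [(of_mem_G hσ).2 k h2]; tauto
  · refine Set.Finite.subset (Finset.Icc 2 m).finite_toSet ?_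
    intro k hk
    rw [Function.mem_support] at hk
    simp only [Finset.coe_Icc, Set.mem_Icc]
    exact hsupp k hk
  · intro h
    have := congrFun h m
    rw [hm1] at this
    simp at this
  · rw [hkap, hm1]

lemma e0_Nval (hm : 2 ≤ m) (hσ : σ ∈ G (Icc 2 (m-1))) :
    Nval q (e0 m σ) = (q m : ℤ) + ∑ k ∈ Icc 2 (m-1), σ k * (q k : ℤ) := by
  have hsupp := e0_supp hm hσ
  have h1 : Nval q (e0 m σ) = ∑ k ∈ Icc 2 m, e0 m σ k * (q k : ℤ) := by
    refine Nval_eq_sum q ?_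
    intro k hk
    rw [Function.mem_support] at hk
    simp only [Finset.coe_Icc, Set.mem_Icc]
    exact hsupp k hk
  rw [h1]
  have hm' : m - 1 + 1 = m := by omega
  rw [← hm', Finset.sum_Icc_succ_top (by omega), hm']
  have h2 : ∀ k ∈ Icc 2 (m-1), e0 m σ k * (q k : ℤ) = σ k * (q k : ℤ) := by
    intro k hk
    rcases Finset.mem_Icc.1 hk with ⟨_, hk2⟩
    unfold e0
    rw [if_neg (by omega)]
  rw [Finset.sum_congr rfl h2]
  have h3 : e0 m σ m = 1 := by simp [e0]
  rw [h3]
  ring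

lemma e0_normE (hm : 2 ≤ m) (hσ : σ ∈ G (Icc 2 (m-1))) :
    normE (e0 m σ) = 1 + ∑ k ∈ Icc 2 (m-1), (σ k).natAbs := by
  have hsupp := e0_supp hm hσ
  have h1 : normE (e0 m σ) = ∑ k ∈ Icc 2 m, (e0 m σ k).natAbs := by
    refine normE_eq_sum ?_
    intro k hk
    rw [Function.mem_support] at hk
    simp only [Finset.coe_Icc, Set.mem_Icc]
    exact hsupp k hk
  rw [h1]
  have hm' : m - 1 + 1 = m := by omega
  rw [← hm', Finset.sum_Icc_succ_top (by omega), hm']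
  have h2 : ∀ k ∈ Icc 2 (m-1), (e0 m σ k).natAbs = (σ k).natAbs := by
    intro k hk
    rcases Finset.mem_Icc.1 hk with ⟨_, hk2⟩
    unfold e0
    rw [if_neg (by omega)]
  rw [Finset.sum_congr rfl h2]
  have h3 : e0 m σ m = 1 := by simp [e0]
  rw [h3]
  simp [add_comm]

lemma e1_supp (hm : 2 ≤ m) (hσ : σ ∈ G (Icc 2 (m-1))) :
    ∀ k, e1 m σ k ≠ 0 → 1 ≤ k ∧ k ≤ m := by
  intro k hk
  unfold e1 at hk
  by_cases h : k = 1
  · omega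
  · rw [if_neg h] at hk
    have := e0_supp hm hσ k hk
    omega

lemma e1_plus (hm : 2 ≤ m) (hσ : σ ∈ G (Icc 2 (m-1))) :
    IsEplus (e1 m σ) ∧ kap (e1 m σ) = m := by
  have hsupp := e1_supp hm hσ
  have hm1 : e1 m σ m = 1 := by
    unfold e1
    rw [if_neg (by omega)]
    simp [e0]
  have hkap : kap (e1 m σ) = m := kap_eq (by rw [hm1]; norm_num) (fun k hk => (hsupp k hk).2)
  refine ⟨⟨⟨?_, ?_, ?_⟩, ?_, ?_⟩, hkap⟩
  · by_contra h
    have := hsupp 0 h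
    omega
  · intro k
    by_cases h : k = 1
    · have he : e1 m σ k = 1 := by unfold e1; rw [if_pos h]
      rw [he]; norm_num
    · have he : e1 m σ k = e0 m σ k := by unfold e1; rw [if_neg h]
      rw [he]
      exact (e0_plus hm hσ).1.1.2.1 k
  · refine Set.Finite.subset (Finset.Icc 1 m).finite_toSet ?_
    intro k hk
    rw [Function.mem_support] at hk
    simp only [Finset.coe_Icc, Set.mem_Icc]
    exact hsupp k hk
  · intro h
    have := congrFun h m
    rw [hm1] at this
    simp at this
  · rw [hkap, hm1]

lemma e1_Nval (hm : 2 ≤ m) (hσ : σ ∈ G (Icc 2 (m-1))) :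
    Nval q (e1 m σ) = (q 1 : ℤ) + Nval q (e0 m σ) := by
  have hsupp := e1_supp hm hσ
  have h1 : Nval q (e1 m σ) = ∑ k ∈ Icc 1 m, e1 m σ k * (q k : ℤ) := by
    refine Nval_eq_sum q ?_
    intro k hk
    rw [Function.mem_support] at hk
    simp only [Finset.coe_Icc, Set.mem_Icc]
    exact hsupp k hk
  have h0 : Nval q (e0 m σ) = ∑ k ∈ Icc 2 m, e0 m σ k * (q k : ℤ) := by
    refine Nval_eq_sum q ?_
    intro k hk
    rw [Function.mem_support] at hk
    simp only [Finset.coe_Icc, Set.mem_Icc]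
    exact e0_supp hm hσ k hk
  have hins : Icc 1 m = insert 1 (Icc 2 m) := by
    ext x
    simp only [Finset.mem_Icc, Finset.mem_insert]
    omega
  rw [h1, hins, Finset.sum_insert (by simp)]
  have h2 : ∀ k ∈ Icc 2 m, e1 m σ k * (q k : ℤ) = e0 m σ k * (q k : ℤ) := by
    intro k hk
    rcases Finset.mem_Icc.1 hk with ⟨hk1, _⟩
    unfold e1
    rw [if_neg (by omega)]
  rw [Finset.sum_congr rfl h2, ← h0]
  have h3 : e1 m σ 1 = 1 := by simp [e1]
  rw [h3]
  ring

lemma e1_normE (hm : 2 ≤ m) (hσ : σ ∈ G (Icc 2 (m-1))) :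
    normE (e1 m σ) = 1 + normE (e0 m σ) := by
  have hsupp := e1_supp hm hσ
  have h1 : normE (e1 m σ) = ∑ k ∈ Icc 1 m, (e1 m σ k).natAbs := by
    refine normE_eq_sum ?_
    intro k hk
    rw [Function.mem_support] at hk
    simp only [Finset.coe_Icc, Set.mem_Icc]
    exact hsupp k hk
  have h0 : normE (e0 m σ) = ∑ k ∈ Icc 2 m, (e0 m σ k).natAbs := by
    refine normE_eq_sum ?_
    intro k hk
    rw [Function.mem_support] at hk
    simp only [Finset.coe_Icc, Set.mem_Icc]
    exact e0_supp hm hσ k hk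
  have hins : Icc 1 m = insert 1 (Icc 2 m) := by
    ext x
    simp only [Finset.mem_Icc, Finset.mem_insert]
    omega
  rw [h1, hins, Finset.sum_insert (by simp)]
  have h2 : ∀ k ∈ Icc 2 m, (e1 m σ k).natAbs = (e0 m σ k).natAbs := by
    intro k hk
    rcases Finset.mem_Icc.1 hk with ⟨hk1, _⟩
    unfold e1
    rw [if_neg (by omega)]
  rw [Finset.sum_congr rfl h2, ← h0]
  have h3 : e1 m σ 1 = 1 := by simp [e1]
  rw [h3]
  simp

end family


/-! ### lower bound -/

lemma lower_bound {q : ℕ → ℕ} (hq : IsSuperGrowth q) {u : ℕ → ℝ}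
    (hu1 : ∀ ε : ℕ → ℤ, IsEplus ε → ∀ n : ℕ, (n : ℤ) = Nval q ε →
      u n = ((1 : ℝ) / 2) ^ normE ε)
    (n : ℕ) (hc4 : 4 ≤ cIdx q n) :
    (1/4 : ℝ) * 2 ^ (cIdx q n - 4) ≤ ∑ k ∈ Icc 1 n, |u k - u (k + q 1)| := by
  set c := cIdx q n with hc
  set m := c - 2 with hmdef
  have hm : 2 ≤ m := by omega
  set s := Icc 2 (m-1) with hs
  -- q (m+1) < n
  have hq1 : q (m+1) < n := by
    by_contra hcon
    push_neg at hcon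
    have := cIdx_le (q := q) (n := n) (k := m+1) (by omega) hcon
    omega
  -- integer bounds
  set B : ℤ := ∑ k ∈ Icc 1 (m-1), (q k : ℤ) with hB
  have h2B : 2 * B < (q m : ℤ) := by
    have := hq.2.2 m (by omega)
    rw [hB]
    push_cast [← Nat.cast_sum]
    exact_mod_cast this
  have hq1B : (q 1 : ℤ) ≤ B := by
    rw [hB]
    refine Finset.single_le_sum (f := fun k => (q k : ℤ)) (fun i _ => by positivity) ?_
    rw [Finset.mem_Icc]; omega
  have hqmn : 2 * (q m : ℤ) < (n : ℤ) := by
    have h1 : (q m : ℤ) ≤ ∑ k ∈ Icc 1 m, (q k : ℤ) := by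
      refine Finset.single_le_sum (f := fun k => (q k : ℤ)) (fun i _ => by positivity) ?_
      rw [Finset.mem_Icc]; omega
    have h2 : 2 * ∑ k ∈ Icc 1 m, (q k : ℤ) < (q (m+1) : ℤ) := by
      have := hq.2.2 (m+1) (by omega)
      simp only [Nat.add_sub_cancel] at this
      push_cast [← Nat.cast_sum]
      exact_mod_cast this
    have h3 : (q (m+1) : ℤ) < (n : ℤ) := by exact_mod_cast hq1
    linarith
  -- per-σ facts
  have hW : ∀ σ ∈ G s, |∑ k ∈ s, σ k * (q k : ℤ)| ≤ B := by
    intro σ hσ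
    have hb : ∀ k, |σ k| ≤ 1 := by
      intro k
      by_cases hk : k ∈ s
      · rcases (of_mem_G hσ).1 k hk with h | h | h <;> simp [h]
      · rw [(of_mem_G hσ).2 k hk]; simp
    calc |∑ k ∈ s, σ k * (q k : ℤ)| ≤ ∑ k ∈ s, (q k : ℤ) := abs_comb_le q σ s hb
    _ ≤ B := by
        rw [hB, hs]
        refine Finset.sum_le_sum_of_subset_of_nonneg ?_ (fun i _ _ => by positivity)
        intro x hx
        rw [Finset.mem_Icc] at hx ⊢
        omega
  have hVpos : ∀ σ ∈ G s, 1 ≤ Nval q (e0 m σ) := by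
    intro σ hσ
    rw [e0_Nval hm hσ]
    have := abs_le.1 (hW σ hσ)
    linarith
  have hVub : ∀ σ ∈ G s, Nval q (e0 m σ) + (q 1 : ℤ) < (n : ℤ) := by
    intro σ hσ
    rw [e0_Nval hm hσ]
    have := abs_le.1 (hW σ hσ)
    linarith
  -- the key index map
  set k0 : (ℕ → ℤ) → ℕ := fun σ => (Nval q (e0 m σ)).toNat with hk0
  have hk0cast : ∀ σ ∈ G s, ((k0 σ : ℤ)) = Nval q (e0 m σ) := by
    intro σ hσ
    exact Int.toNat_of_nonneg (by linarith [hVpos σ hσ])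
  have hk0mem : ∀ σ ∈ G s, k0 σ ∈ Icc 1 n := by
    intro σ hσ
    rw [Finset.mem_Icc]
    constructor
    · have := hVpos σ hσ
      have h2 := hk0cast σ hσ
      omega
    · have h1 := hVub σ hσ
      have h2 := hk0cast σ hσ
      have h3 : (0:ℤ) ≤ (q 1 : ℤ) := by positivity
      omega
  -- term value
  have hterm : ∀ σ ∈ G s,
      |u (k0 σ) - u (k0 σ + q 1)| = (1/4 : ℝ) * (1/2) ^ (∑ k ∈ s, (σ k).natAbs) := by
    intro σ hσ
    have hA : u (k0 σ) = ((1:ℝ)/2) ^ normE (e0 m σ) :=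
      hu1 _ (e0_plus hm hσ).1 _ (hk0cast σ hσ)
    have hBv : u (k0 σ + q 1) = ((1:ℝ)/2) ^ normE (e1 m σ) := by
      refine hu1 _ (e1_plus hm hσ).1 _ ?_
      rw [e1_Nval hm hσ]
      push_cast
      rw [hk0cast σ hσ]
      ring
    rw [hA, hBv, e1_normE hm hσ, e0_normE hm hσ]
    set t := ∑ k ∈ s, (σ k).natAbs with ht
    have he : ((1:ℝ)/2) ^ (1+t) - (1/2) ^ (1+(1+t)) = (1/4) * (1/2)^t := by
      rw [pow_add, pow_add, pow_add]
      norm_num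
      ring
    rw [he]
    rw [abs_of_nonneg (by positivity)]
  -- injectivity
  have hinj : ∀ σ ∈ G s, ∀ σ' ∈ G s, k0 σ = k0 σ' → σ = σ' := by
    intro σ hσ σ' hσ' heq
    have hVeq : Nval q (e0 m σ) = Nval q (e0 m σ') := by
      rw [← hk0cast σ hσ, ← hk0cast σ' hσ', heq]
    rw [e0_Nval hm hσ, e0_Nval hm hσ'] at hVeq
    have hWeq : ∑ k ∈ s, σ k * (q k : ℤ) = ∑ k ∈ s, σ' k * (q k : ℤ) := by linarith
    set δ : ℕ → ℤ := fun k => σ k - σ' k with hδ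
    have hb2 : ∀ k, |δ k| ≤ 2 := by
      intro k
      by_cases hk : k ∈ s
      · have h1 := (of_mem_G hσ).1 k hk
        have h2 := (of_mem_G hσ').1 k hk
        rcases h1 with h|h|h <;> rcases h2 with h'|h'|h' <;> simp [hδ, h, h']
      · simp [hδ, (of_mem_G hσ).2 k hk, (of_mem_G hσ').2 k hk]
    have hsum0 : ∑ k ∈ Icc 1 (m-1), δ k * (q k : ℤ) = 0 := by
      have hz : ∑ k ∈ s, δ k * (q k : ℤ) = 0 := by
        have : ∑ k ∈ s, δ k * (q k : ℤ)
            = ∑ k ∈ s, σ k * (q k : ℤ) - ∑ k ∈ s, σ' k * (q k : ℤ) := by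
          rw [← Finset.sum_sub_distrib]
          refine Finset.sum_congr rfl fun k _ => ?_
          simp [hδ, sub_mul]
        rw [this, hWeq]
        ring
      rw [← hz]
      refine (Finset.sum_subset ?_ ?_).symm
      · intro x hx
        rw [hs, Finset.mem_Icc] at hx
        rw [Finset.mem_Icc]
        omega
      · intro x _ hxs
        simp [hδ, (of_mem_G hσ).2 x hxs, (of_mem_G hσ').2 x hxs]
    have hzero := uniq hq (m-1) δ hb2 hsum0
    funext k
    by_cases hk : k ∈ s
    · have hk' : k ∈ Icc 1 (m-1) := by
        rw [hs, Finset.mem_Icc] at hk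
        rw [Finset.mem_Icc]
        omega
      have := hzero k hk'
      simp [hδ] at this
      linarith
    · rw [(of_mem_G hσ).2 k hk, (of_mem_G hσ').2 k hk]
  -- assemble
  have hchain : (1/4 : ℝ) * 2 ^ s.card ≤ ∑ k ∈ Icc 1 n, |u k - u (k + q 1)| := by
    have h1 : ∑ k ∈ (G s).image k0, |u k - u (k + q 1)|
        ≤ ∑ k ∈ Icc 1 n, |u k - u (k + q 1)| := by
      refine Finset.sum_le_sum_of_subset_of_nonneg ?_ (fun i _ _ => abs_nonneg _)
      intro x hx
      rcases Finset.mem_image.1 hx with ⟨σ, hσ, rfl⟩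
      exact hk0mem σ hσ
    have h2 : ∑ k ∈ (G s).image k0, |u k - u (k + q 1)|
        = ∑ σ ∈ G s, |u (k0 σ) - u (k0 σ + q 1)| := Finset.sum_image hinj
    have h3 : ∑ σ ∈ G s, |u (k0 σ) - u (k0 σ + q 1)|
        = (1/4 : ℝ) * ∑ σ ∈ G s, (1/2 : ℝ) ^ (∑ k ∈ s, (σ k).natAbs) := by
      rw [Finset.mul_sum]
      exact Finset.sum_congr rfl hterm
    have h4 := sum_G s
    calc (1/4 : ℝ) * 2 ^ s.card = (1/4 : ℝ) * ∑ σ ∈ G s, ((1:ℝ)/2) ^ (∑ k ∈ s, (σ k).natAbs) := by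
          rw [h4]
    _ = ∑ σ ∈ G s, |u (k0 σ) - u (k0 σ + q 1)| := h3.symm
    _ = ∑ k ∈ (G s).image k0, |u k - u (k + q 1)| := h2.symm
    _ ≤ _ := h1
  have hcard : s.card = c - 4 := by
    rw [hs, Nat.card_Icc]
    omega
  rw [← hcard]
  exact hchain


/-! ### upper bound -/

lemma u_nonneg {q : ℕ → ℕ} {u : ℕ → ℝ}
    (hu1 : ∀ ε : ℕ → ℤ, IsEplus ε → ∀ n : ℕ, (n : ℤ) = Nval q ε →
      u n = ((1 : ℝ) / 2) ^ normE ε)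
    (hu2 : ∀ n : ℕ, 1 ≤ n → (∀ ε : ℕ → ℤ, IsEplus ε → Nval q ε ≠ (n : ℤ)) → u n = 0)
    (n : ℕ) (hn : 1 ≤ n) : 0 ≤ u n := by
  by_cases h : ∃ ε : ℕ → ℤ, IsEplus ε ∧ Nval q ε = (n : ℤ)
  · obtain ⟨ε, hε, hN⟩ := h
    rw [hu1 ε hε n hN.symm]
    positivity
  · push_neg at h
    rw [hu2 n hn h]

lemma sum_u_le {q : ℕ → ℕ} (hq : IsSuperGrowth q) {u : ℕ → ℝ}
    (hu1 : ∀ ε : ℕ → ℤ, IsEplus ε → ∀ n : ℕ, (n : ℤ) = Nval q ε →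
      u n = ((1 : ℝ) / 2) ^ normE ε)
    (hu2 : ∀ n : ℕ, 1 ≤ n → (∀ ε : ℕ → ℤ, IsEplus ε → Nval q ε ≠ (n : ℤ)) → u n = 0)
    (N : ℕ) : ∑ k ∈ Icc 1 N, u k ≤ 2 ^ (cIdx q (2*N+1)) := by
  classical
  set M := cIdx q (2*N+1) with hM
  have hM1 : 1 ≤ M := (cIdx_spec hq (2*N+1)).1
  have hMq : 2*N+1 ≤ q M := (cIdx_spec hq (2*N+1)).2
  have hκ : ∀ ε : ℕ → ℤ, IsEplus ε → Nval q ε ≤ (N : ℤ) → kap ε ≤ M := by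
    intro ε hε hNle
    by_contra hcon
    push_neg at hcon
    have h1 : q M ≤ q (kap ε) := q_mono hq hM1 hcon.le
    have h2 := q_kap_lt_two_Nval hq hε
    have h3 : (q M : ℤ) ≤ (q (kap ε) : ℤ) := by exact_mod_cast h1
    have h4 : (2*N+1 : ℤ) ≤ (q M : ℤ) := by exact_mod_cast hMq
    linarith
  set A := (Icc 1 N).filter (fun k => u k ≠ 0) with hA
  have hAs : ∑ k ∈ Icc 1 N, u k = ∑ k ∈ A, u k := (Finset.sum_filter_ne_zero _).symm
  have hex : ∀ k ∈ A, ∃ ε : ℕ → ℤ, IsEplus ε ∧ Nval q ε = (k : ℤ) := by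
    intro k hk
    rw [hA, Finset.mem_filter, Finset.mem_Icc] at hk
    by_contra hcon
    push_neg at hcon
    exact hk.2 (hu2 k hk.1.1 hcon)
  set φ : ℕ → (ℕ → ℤ) := fun k =>
    if h : ∃ ε : ℕ → ℤ, IsEplus ε ∧ Nval q ε = (k : ℤ) then h.choose else 0 with hφ
  have hφ1 : ∀ k ∈ A, IsEplus (φ k) ∧ Nval q (φ k) = (k : ℤ) := by
    intro k hk
    have h := hex k hk
    simp only [hφ, dif_pos h]
    exact h.choose_spec
  set w : (ℕ → ℤ) → ℝ := fun σ => ((1:ℝ)/2) ^ (∑ i ∈ Icc 1 M, (σ i).natAbs) with hw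
  have hmem : ∀ k ∈ A, φ k ∈ G (Icc 1 M) := by
    intro k hk
    obtain ⟨hε, hNv⟩ := hφ1 k hk
    rw [hA, Finset.mem_filter, Finset.mem_Icc] at hk
    have hκk : kap (φ k) ≤ M := by
      refine hκ _ hε ?_
      rw [hNv]
      exact_mod_cast hk.1.2
    refine mem_G_of (fun i _ => hε.1.2.1 i) ?_
    intro i hi
    rw [Finset.mem_Icc] at hi
    push_neg at hi
    by_cases h0 : i = 0
    · rw [h0]; exact hε.1.1
    · exact eps_zero_of_gt hε.1.2.2 (by omega)
  have hval : ∀ k ∈ A, u k = w (φ k) := by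
    intro k hk
    obtain ⟨hε, hNv⟩ := hφ1 k hk
    rw [hu1 _ hε k hNv.symm, hw]
    congr 1
    refine normE_eq_sum ?_
    have hκk : kap (φ k) ≤ M := by
      rw [hA, Finset.mem_filter, Finset.mem_Icc] at hk
      refine hκ _ hε ?_
      rw [hNv]
      exact_mod_cast hk.1.2
    refine subset_trans (supp_subset_Icc hε) ?_
    intro x hx
    simp only [Finset.coe_Icc, Set.mem_Icc] at hx ⊢
    omega
  have hφinj : ∀ k ∈ A, ∀ k' ∈ A, φ k = φ k' → k = k' := by
    intro k hk k' hk' heq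
    have h1 := (hφ1 k hk).2
    have h2 := (hφ1 k' hk').2
    rw [heq] at h1
    rw [h1] at h2
    exact_mod_cast h2
  calc ∑ k ∈ Icc 1 N, u k = ∑ k ∈ A, u k := hAs
  _ = ∑ k ∈ A, w (φ k) := Finset.sum_congr rfl hval
  _ = ∑ σ ∈ A.image φ, w σ := (Finset.sum_image hφinj).symm
  _ ≤ ∑ σ ∈ G (Icc 1 M), w σ := by
      refine Finset.sum_le_sum_of_subset_of_nonneg ?_ (fun i _ _ => by rw [hw]; positivity)
      intro x hx
      rcases Finset.mem_image.1 hx with ⟨k, hk, rfl⟩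
      exact hmem k hk
  _ = 2 ^ (Icc 1 M).card := sum_G (Icc 1 M)
  _ = 2 ^ M := by rw [Nat.card_Icc]; norm_num


end S2

open S2

/-- Let `q` be a super growth sequence and `u : ℕ≥1 → ℝ` be given by
`u n = 2^{−‖ε‖}` if `n = N(ε)` for some `ε ∈ ℰ⁺`, and `u n = 0` otherwise (well defined
since `ε ↦ N(ε)` is injective). With `c(n) = min{k ≥ 1 : q k ≥ n}`, one has
`liminf_{n→∞} 2^{−c(n)} ∑_{k=1}^{n} |u k − u (k + q 1)| > 0`. -/
theorem stmt2 (q : ℕ → ℕ) (hq : IsSuperGrowth q) (u : ℕ → ℝ)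
    (hu1 : ∀ ε : ℕ → ℤ, IsEplus ε → ∀ n : ℕ, (n : ℤ) = Nval q ε →
      u n = ((1 : ℝ) / 2) ^ normE ε)
    (hu2 : ∀ n : ℕ, 1 ≤ n → (∀ ε : ℕ → ℤ, IsEplus ε → Nval q ε ≠ (n : ℤ)) → u n = 0) :
    0 < Filter.liminf (fun n : ℕ =>
        (∑ k ∈ Finset.Icc 1 n, |u k - u (k + q 1)|) / 2 ^ cIdx q n) Filter.atTop := by
  set R : ℕ → ℝ := fun n => (∑ k ∈ Finset.Icc 1 n, |u k - u (k + q 1)|) / 2 ^ cIdx q n with hR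
  have hev : ∀ᶠ n in Filter.atTop, (1/64 : ℝ) ≤ R n ∧ R n ≤ 6 := by
    rw [Filter.eventually_atTop]
    refine ⟨q 1 + q 3 + 1, ?_⟩
    intro n hn
    have hq3 : q 3 < n := by omega
    have hq1n : q 1 ≤ n := by omega
    have hc4 : 4 ≤ cIdx q n := lt_cIdx hq (by norm_num) hq3
    set c := cIdx q n with hc
    have hcq : n ≤ q c := (cIdx_spec hq n).2
    have h2cpos : (0:ℝ) < 2 ^ c := by positivity
    have hqc1 : 2*n+1 ≤ q (c+1) := by
      have hs := hq.2.2 (c+1) (by omega)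
      simp only [Nat.add_sub_cancel] at hs
      have h1 : q c ≤ ∑ k ∈ Icc 1 c, q k :=
        Finset.single_le_sum (f := fun k => q k) (fun i _ => Nat.zero_le _)
          (Finset.mem_Icc.2 ⟨by omega, le_rfl⟩)
      omega
    constructor
    · -- lower bound
      have hlb := lower_bound hq hu1 n hc4
      rw [hR]
      rw [le_div_iff₀ h2cpos]
      have hce : c = (c - 4) + 4 := by omega
      have h2c : (2:ℝ)^c = 2^(c-4) * 16 := by
        rw [hce, pow_add]
        norm_num
      calc (1/64 : ℝ) * 2^c = 1/4 * 2^(c-4) := by rw [h2c]; ring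
      _ ≤ _ := hlb
    · -- upper bound
      have habs : ∀ k ∈ Icc 1 n, |u k - u (k + q 1)| ≤ u k + u (k + q 1) := by
        intro k hk
        rw [Finset.mem_Icc] at hk
        have h1 := u_nonneg hu1 hu2 k hk.1
        have h2 := u_nonneg hu1 hu2 (k + q 1) (by omega)
        calc |u k - u (k + q 1)| ≤ |u k| + |u (k + q 1)| := abs_sub _ _
        _ = u k + u (k + q 1) := by rw [abs_of_nonneg h1, abs_of_nonneg h2]
      have hsum1 : ∑ k ∈ Icc 1 n, u k ≤ 2 ^ (cIdx q (2*n+1)) := sum_u_le hq hu1 hu2 n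
      have hM1le : cIdx q (2*n+1) ≤ c + 1 := cIdx_le (by omega) hqc1
      have hsum2 : ∑ k ∈ Icc 1 n, u (k + q 1) ≤ 2 ^ (cIdx q (2*(n + q 1)+1)) := by
        have hreindex : ∑ k ∈ Icc 1 n, u (k + q 1)
            = ∑ j ∈ (Icc 1 n).image (· + q 1), u j :=
          (Finset.sum_image (fun a _ b _ h => by omega)).symm
        rw [hreindex]
        calc ∑ j ∈ (Icc 1 n).image (· + q 1), u j ≤ ∑ j ∈ Icc 1 (n + q 1), u j := by
              refine Finset.sum_le_sum_of_subset_of_nonneg ?_ ?_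
              · intro x hx
                rcases Finset.mem_image.1 hx with ⟨k, hk, rfl⟩
                rw [Finset.mem_Icc] at hk ⊢
                omega
              · intro i hi _
                rw [Finset.mem_Icc] at hi
                exact u_nonneg hu1 hu2 i hi.1
        _ ≤ 2 ^ (cIdx q (2*(n + q 1)+1)) := sum_u_le hq hu1 hu2 (n + q 1)
      have hM2le : cIdx q (2*(n + q 1)+1) ≤ c + 2 := by
        refine cIdx_le (by omega) ?_
        have hs2 := hq.2.2 (c+2) (by omega)
        have he : c + 2 - 1 = c + 1 := by omega
        rw [he] at hs2
        have hsplit : ∑ k ∈ Icc 1 (c+1), q k = ∑ k ∈ Icc 1 c, q k + q (c+1) :=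
          Finset.sum_Icc_succ_top (by omega) _
        have h1 : q c ≤ ∑ k ∈ Icc 1 c, q k :=
          Finset.single_le_sum (f := fun k => q k) (fun i _ => Nat.zero_le _)
            (Finset.mem_Icc.2 ⟨by omega, le_rfl⟩)
        omega
      rw [hR, div_le_iff₀ h2cpos]
      have hp1 : (2:ℝ) ^ (cIdx q (2*n+1)) ≤ 2 ^ (c+1) :=
        pow_le_pow_right₀ one_le_two hM1le
      have hp2 : (2:ℝ) ^ (cIdx q (2*(n + q 1)+1)) ≤ 2 ^ (c+2) :=
        pow_le_pow_right₀ one_le_two hM2le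
      have hS : ∑ k ∈ Icc 1 n, |u k - u (k + q 1)|
          ≤ ∑ k ∈ Icc 1 n, u k + ∑ k ∈ Icc 1 n, u (k + q 1) := by
        rw [← Finset.sum_add_distrib]
        exact Finset.sum_le_sum habs
      have hpow : (2:ℝ)^(c+1) + 2^(c+2) = 6 * 2^c := by
        rw [pow_succ, pow_succ, pow_succ]
        ring
      calc ∑ k ∈ Icc 1 n, |u k - u (k + q 1)|
          ≤ ∑ k ∈ Icc 1 n, u k + ∑ k ∈ Icc 1 n, u (k + q 1) := hS
      _ ≤ (2:ℝ) ^ (cIdx q (2*n+1)) + 2 ^ (cIdx q (2*(n + q 1)+1)) :=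
          add_le_add hsum1 hsum2
      _ ≤ (2:ℝ)^(c+1) + 2^(c+2) := add_le_add hp1 hp2
      _ = 6 * 2^c := hpow
  have hbdd : Filter.IsBoundedUnder (· ≤ ·) Filter.atTop R :=
    ⟨6, by rw [Filter.eventually_map]; exact hev.mono fun n h => h.2⟩
  have hco := hbdd.isCoboundedUnder_ge
  have hle : (1/64 : ℝ) ≤ Filter.liminf R Filter.atTop :=
    Filter.le_liminf_of_le hco (hev.mono fun n h => h.1)
  calc (0:ℝ) < 1/64 := by norm_num
  _ ≤ _ := hle
end

section
/- Let f be a lifetime distribution. For every θ with 0 < θ < π/2, letting K = ⌊2/(πθ)⌋, one has |∑_{n=1}^{K} f(n)·(2 sin²(nθ/2) − i sin(nθ))| ≥ (2/π)·θ·M(K). -/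
open Finset

/-!
For `n ≤ K = ⌊2/(πθ)⌋` we have `nθ ≤ 2/π ≤ π/2`, so Jordan's inequality `sin x ≥ (2/π) x` gives
`f(n) sin(nθ) ≥ (2/π) θ n f(n)`. Summing, `(2/π) θ M(K)` is bounded by minus the imaginary part
of the sum, hence by its modulus.
-/

lemma Real.two_div_pi_le_pi_div_two : 2 / Real.pi ≤ Real.pi / 2 := by
  rw [div_le_div_iff₀ Real.pi_pos two_pos]
  nlinarith [Real.pi_gt_three]

lemma Nat.cast_mul_le_of_le_floor_div {n : ℕ} {c θ : ℝ} (hθ : 0 < θ) (hc : 0 ≤ c)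
    (hn : n ≤ ⌊c / θ⌋₊) : (n : ℝ) * θ ≤ c :=
  (le_div_iff₀ hθ).1 <| (Nat.cast_le.2 hn).trans (Nat.floor_le (div_nonneg hc hθ.le))

lemma sum_mul_le_sum_mul_sin (f : ℕ → ℝ) (hf : ∀ n, 0 ≤ f n) {θ : ℝ} (hθ : 0 < θ) :
    (2 / Real.pi) * θ * ∑ n ∈ Icc 1 ⌊2 / (Real.pi * θ)⌋₊, (n : ℝ) * f n ≤
      ∑ n ∈ Icc 1 ⌊2 / (Real.pi * θ)⌋₊, f n * Real.sin (n * θ) := by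
  rw [mul_sum]
  refine sum_le_sum fun n hn => ?_
  have hnθ : (n : ℝ) * θ ≤ 2 / Real.pi := by
    refine Nat.cast_mul_le_of_le_floor_div hθ (by positivity) ?_
    rw [div_div]
    exact (mem_Icc.1 hn).2
  have hjordan : 2 / Real.pi * (n * θ) ≤ Real.sin (n * θ) :=
    Real.mul_le_sin (by positivity) (hnθ.trans Real.two_div_pi_le_pi_div_two)
  calc 2 / Real.pi * θ * (n * f n) = 2 / Real.pi * (n * θ) * f n := by ring
    _ ≤ Real.sin (n * θ) * f n := mul_le_mul_of_nonneg_right hjordan (hf n)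
    _ = f n * Real.sin (n * θ) := mul_comm _ _

lemma Complex.im_sum_ofReal_mul_sub_I_mul (s : Finset ℕ) (f a b : ℕ → ℝ) :
    (∑ n ∈ s, (f n : ℂ) * (2 * (a n : ℂ) ^ 2 - Complex.I * (b n : ℂ))).im =
      -∑ n ∈ s, f n * b n := by
  rw [Complex.im_sum, ← sum_neg_distrib]
  refine sum_congr rfl fun n _ => ?_
  simp [Complex.mul_im, pow_two]

theorem stmt5_general (f : ℕ → ℝ)
    (hfpos : ∀ n, 0 ≤ f n)
    (θ : ℝ) (hθ0 : 0 < θ) :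
    (2 / Real.pi) * θ * ∑ n ∈ Finset.Icc 1 ⌊2 / (Real.pi * θ)⌋₊, (n : ℝ) * f n ≤
      ‖(∑ n ∈ Finset.Icc 1 ⌊2 / (Real.pi * θ)⌋₊,
        (f n : ℂ) * (2 * (Real.sin ((n : ℝ) * θ / 2) : ℂ) ^ 2
          - Complex.I * (Real.sin ((n : ℝ) * θ) : ℂ)))‖ := by
  calc _ ≤ ∑ n ∈ Icc 1 ⌊2 / (Real.pi * θ)⌋₊, f n * Real.sin (n * θ) :=
        sum_mul_le_sum_mul_sin f hfpos hθ0
    _ ≤ |∑ n ∈ Icc 1 ⌊2 / (Real.pi * θ)⌋₊, f n * Real.sin (n * θ)| := le_abs_self _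
    _ = |(∑ n ∈ Icc 1 ⌊2 / (Real.pi * θ)⌋₊,
          (f n : ℂ) * (2 * (Real.sin ((n : ℝ) * θ / 2) : ℂ) ^ 2
            - Complex.I * (Real.sin ((n : ℝ) * θ) : ℂ))).im| := by
        rw [Complex.im_sum_ofReal_mul_sub_I_mul, abs_neg]
    _ ≤ _ := Complex.abs_im_le_norm _

/-- For a lifetime distribution `f` and `0 < θ < π/2`, with
`K = ⌊2/(πθ)⌋`, one has `|∑_{n=1}^{K} f(n)(2 sin²(nθ/2) − i sin(nθ))| ≥ (2/π)·θ·M(K)`. -/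
theorem stmt5 (f : ℕ → ℝ)
    (hf0 : f 0 = 0) (hfpos : ∀ n, 0 ≤ f n) (hfsum : HasSum f 1)
    (θ : ℝ) (hθ0 : 0 < θ) (hθ : θ < Real.pi / 2) :
    (2 / Real.pi) * θ * ∑ n ∈ Finset.Icc 1 ⌊2 / (Real.pi * θ)⌋₊, (n : ℝ) * f n ≤
      ‖(∑ n ∈ Finset.Icc 1 ⌊2 / (Real.pi * θ)⌋₊,
        (f n : ℂ) * (2 * (Real.sin ((n : ℝ) * θ / 2) : ℂ) ^ 2
          - Complex.I * (Real.sin ((n : ℝ) * θ) : ℂ)))‖ :=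
  stmt5_general f hfpos θ hθ0
end

section
/- Let f be a lifetime distribution and f̂(θ) = ∑_{n≥1} f(n)·e^{inθ}. Suppose 0 < θ < π/2, let K = ⌊2/(πθ)⌋, and suppose η ∈ (0,1) satisfies c(K+1) ≤ ((1−η)/√5)·(2/π)·θ·M(K). Then |1 − f̂(θ)| ≥ (2η/π)·θ·M(K). -/
open Finset

/-- `rnwC f N = ∑_{n ≥ N} f n`, the tail of the lifetime distribution. -/
noncomputable def rnwC (f : ℕ → ℝ) (N : ℕ) : ℝ := ∑' k : ℕ, f (N + k)

/-- The characteristic function `f̂(θ) = ∑_{n ≥ 1} f(n) e^{inθ}` of the lifetime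
distribution (the `n = 0` term vanishes since `f 0 = 0`). -/
noncomputable def fhat (f : ℕ → ℝ) (θ : ℝ) : ℂ :=
  ∑' n : ℕ, (f n : ℂ) * Complex.exp (Complex.I * n * θ)

/-!
Since `‖1 - f̂(θ)‖ ≥ Im f̂(θ) = ∑ f(n) sin(nθ)`, it suffices to bound this sine series from
below. For `n ≤ K` we have `nθ ≤ 2/π ≤ π/2`, so Jordan's inequality `sin x ≥ (2/π) x` gives
the terms with `n ≤ K` a total of at least `(2/π) θ M(K)`; the remaining terms contribute at
least `-c(K+1)`, which the hypothesis bounds by `(1 - η) (2/π) θ M(K)`.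
-/

open Real

section SineSeries

variable {f : ℕ → ℝ}

theorem summable_mul_exp_I_mul (hf : Summable f) (θ : ℝ) :
    Summable fun n : ℕ => (f n : ℂ) * Complex.exp (Complex.I * n * θ) := by
  refine Summable.of_norm_bounded hf.abs fun n => ?_
  rw [norm_mul, Complex.norm_real, Real.norm_eq_abs, Complex.norm_exp]
  simp

theorem im_fhat (hf : Summable f) (θ : ℝ) :
    (fhat f θ).im = ∑' n : ℕ, f n * sin (n * θ) := by
  rw [fhat, Complex.im_tsum (summable_mul_exp_I_mul hf θ)]
  congr 1 with n
  rw [show Complex.I * n * θ = ((n * θ : ℝ) : ℂ) * Complex.I by push_cast; ring,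
    Complex.im_ofReal_mul, Complex.exp_ofReal_mul_I_im]

theorem summable_mul_sin (hf : Summable f) (θ : ℝ) :
    Summable fun n : ℕ => f n * sin (n * θ) :=
  Summable.of_norm_bounded hf.abs fun n => by
    rw [Real.norm_eq_abs, abs_mul]
    exact mul_le_of_le_one_right (abs_nonneg _) (abs_sin_le_one _)

theorem sum_range_mul_sin_sub_rnwC_le (hfpos : ∀ n, 0 ≤ f n) (hf : Summable f) (θ : ℝ) (N : ℕ) :
    ∑ n ∈ range N, f n * sin (n * θ) - rnwC f N ≤ ∑' n : ℕ, f n * sin (n * θ) := by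
  have htail : -rnwC f N ≤ ∑' k : ℕ, f (k + N) * sin ((k + N : ℕ) * θ) := by
    simp_rw [rnwC, add_comm N, ← tsum_neg]
    refine Summable.tsum_le_tsum (fun k => ?_) ((summable_nat_add_iff N).2 hf).neg
      ((summable_nat_add_iff N).2 (summable_mul_sin hf θ))
    nlinarith [hfpos (k + N), neg_one_le_sin ((k + N : ℕ) * θ)]
  rw [← (summable_mul_sin hf θ).sum_add_tsum_nat_add N]
  linarith

theorem mul_sum_Icc_le_sum_range_mul_sin (hfpos : ∀ n, 0 ≤ f n) {θ : ℝ} (hθ : 0 ≤ θ) {K : ℕ}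
    (hK : K * θ ≤ π / 2) :
    2 / π * θ * ∑ n ∈ Icc 1 K, (n : ℝ) * f n ≤ ∑ n ∈ range (K + 1), f n * sin (n * θ) := by
  have hnθ : ∀ n ∈ range (K + 1), 0 ≤ (n : ℝ) * θ ∧ (n : ℝ) * θ ≤ π / 2 := fun n hn => by
    have : (n : ℝ) ≤ K := by exact_mod_cast Nat.lt_succ_iff.1 (mem_range.1 hn)
    exact ⟨by positivity, le_trans (by gcongr) hK⟩
  have hIcc : Icc 1 K ⊆ range (K + 1) := fun n hn => mem_range.2 (by grind)
  calc 2 / π * θ * ∑ n ∈ Icc 1 K, (n : ℝ) * f n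
      = ∑ n ∈ Icc 1 K, f n * (2 / π * (n * θ)) := by rw [mul_sum]; congr 1 with n; ring
    _ ≤ ∑ n ∈ Icc 1 K, f n * sin (n * θ) := sum_le_sum fun n hn =>
        mul_le_mul_of_nonneg_left (mul_le_sin (hnθ n (hIcc hn)).1 (hnθ n (hIcc hn)).2) (hfpos n)
    _ ≤ ∑ n ∈ range (K + 1), f n * sin (n * θ) :=
        sum_le_sum_of_subset_of_nonneg hIcc fun n hn _ => mul_nonneg (hfpos n)
          (sin_nonneg_of_nonneg_of_le_pi (hnθ n hn).1 ((hnθ n hn).2.trans (by linarith [pi_pos])))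

end SineSeries

theorem natFloor_two_div_pi_mul_mul_le_pi_div_two {θ : ℝ} (hθ : 0 < θ) : ⌊2 / (π * θ)⌋₊ * θ ≤ π / 2 :=
  calc ⌊2 / (π * θ)⌋₊ * θ ≤ 2 / (π * θ) * θ := by gcongr; exact Nat.floor_le (by positivity)
    _ = 2 / π := by field_simp
    _ ≤ π / 2 := by rw [div_le_div_iff₀ pi_pos two_pos]; nlinarith [pi_gt_three]

theorem im_le_norm_one_sub (z : ℂ) : z.im ≤ ‖1 - z‖ := by
  simpa using (neg_le_abs _).trans (Complex.abs_im_le_norm (1 - z))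

theorem stmt7_general (f : ℕ → ℝ)
    (hfpos : ∀ n, 0 ≤ f n) (hfsum : HasSum f 1)
    (θ η : ℝ) (hθ0 : 0 < θ) (hη1 : η < 1)
    (hc : rnwC f (⌊2 / (Real.pi * θ)⌋₊ + 1) ≤
      ((1 - η) / Real.sqrt 5) * ((2 / Real.pi) * θ *
        ∑ n ∈ Finset.Icc 1 ⌊2 / (Real.pi * θ)⌋₊, (n : ℝ) * f n)) :
    (2 * η / Real.pi) * θ * ∑ n ∈ Finset.Icc 1 ⌊2 / (Real.pi * θ)⌋₊, (n : ℝ) * f n ≤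
      ‖1 - fhat f θ‖ := by
  set K := ⌊2 / (π * θ)⌋₊
  set A := 2 / π * θ * ∑ n ∈ Icc 1 K, (n : ℝ) * f n
  have hA : 0 ≤ A := by
    have := pi_pos
    have := sum_nonneg fun n (_ : n ∈ Icc 1 K) => mul_nonneg (Nat.cast_nonneg n) (hfpos n)
    positivity
  have hcA : rnwC f (K + 1) ≤ (1 - η) * A :=
    hc.trans (mul_le_mul_of_nonneg_right
      (div_le_self (by linarith) (Real.one_le_sqrt.2 (by norm_num))) hA)
  have hIm : A - rnwC f (K + 1) ≤ (fhat f θ).im := by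
    rw [im_fhat hfsum.summable]
    exact (sub_le_sub_right (mul_sum_Icc_le_sum_range_mul_sin hfpos hθ0.le
      (natFloor_two_div_pi_mul_mul_le_pi_div_two hθ0)) _).trans
      (sum_range_mul_sin_sub_rnwC_le hfpos hfsum.summable θ (K + 1))
  calc 2 * η / π * θ * ∑ n ∈ Icc 1 K, (n : ℝ) * f n = η * A := by ring
    _ ≤ A - rnwC f (K + 1) := by linarith
    _ ≤ ‖1 - fhat f θ‖ := hIm.trans (im_le_norm_one_sub _)

/-- For a lifetime distribution `f`, `0 < θ < π/2`, `K = ⌊2/(πθ)⌋` and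
`η ∈ (0,1)` with `c(K+1) ≤ ((1−η)/√5)·(2/π)·θ·M(K)`, one has
`|1 − f̂(θ)| ≥ (2η/π)·θ·M(K)`. -/
theorem stmt7 (f : ℕ → ℝ)
    (hf0 : f 0 = 0) (hfpos : ∀ n, 0 ≤ f n) (hfsum : HasSum f 1)
    (θ η : ℝ) (hθ0 : 0 < θ) (hθ : θ < Real.pi / 2) (hη0 : 0 < η) (hη1 : η < 1)
    (hc : rnwC f (⌊2 / (Real.pi * θ)⌋₊ + 1) ≤
      ((1 - η) / Real.sqrt 5) * ((2 / Real.pi) * θ *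
        ∑ n ∈ Finset.Icc 1 ⌊2 / (Real.pi * θ)⌋₊, (n : ℝ) * f n)) :
    (2 * η / Real.pi) * θ * ∑ n ∈ Finset.Icc 1 ⌊2 / (Real.pi * θ)⌋₊, (n : ℝ) * f n ≤
      ‖1 - fhat f θ‖ :=
  stmt7_general f hfpos hfsum θ η hθ0 hη1 hc
end

section
/- Let c : {1,2,...} → (0,∞) be nonincreasing and set L(N) = ∑_{k=1}^{N} c(k). If there are R ∈ (0,1) and N₀ ≥ 1 such that N·c(N) ≤ R·L(N) for all N ≥ N₀, then there is a constant C > 0 with L(N) ≤ C·N^R for all N ≥ 1. -/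
open Finset

/-- If `c` is a nonincreasing positive sequence (indexed by `n ≥ 1`) with
partial sums `L(N) = ∑_{k=1}^N c(k)`, and `N·c(N) ≤ R·L(N)` for all `N ≥ N₀` for some
`R ∈ (0,1)`, then `L(N) ≤ C·N^R` for some constant `C > 0` and all `N ≥ 1`. -/
theorem stmt9 (c : ℕ → ℝ)
    (hpos : ∀ n : ℕ, 1 ≤ n → 0 < c n)
    (hmono : ∀ m n : ℕ, 1 ≤ m → m ≤ n → c n ≤ c m)
    (R : ℝ) (hR0 : 0 < R) (hR1 : R < 1) (N₀ : ℕ) (hN₀ : 1 ≤ N₀)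
    (h : ∀ N : ℕ, N₀ ≤ N → (N : ℝ) * c N ≤ R * ∑ k ∈ Finset.Icc 1 N, c k) :
    ∃ C : ℝ, 0 < C ∧ ∀ N : ℕ, 1 ≤ N →
      ∑ k ∈ Finset.Icc 1 N, c k ≤ C * (N : ℝ) ^ R := by
  set L : ℕ → ℝ := fun N => ∑ k ∈ Finset.Icc 1 N, c k with hL
  have hLpos : ∀ N, 1 ≤ N → 0 < L N := by
    intro N hN
    apply Finset.sum_pos
    · intro i hi; exact hpos i (Finset.mem_Icc.mp hi).1
    · exact ⟨1, Finset.mem_Icc.mpr ⟨le_refl 1, hN⟩⟩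
  have hLsucc : ∀ n, L (n + 1) = L n + c (n + 1) := by
    intro n
    simp only [hL]
    rw [Finset.sum_Icc_succ_top (by omega : 1 ≤ n + 1)]
  have hN0pos : (0 : ℝ) < (N₀ : ℝ) := by exact_mod_cast hN₀
  set K : ℝ := L N₀ / (N₀ : ℝ) ^ R with hK
  have hKpos : 0 < K := div_pos (hLpos N₀ hN₀) (Real.rpow_pos_of_pos hN0pos R)
  have main : ∀ N, N₀ ≤ N → L N ≤ K * (N : ℝ) ^ R := by
    intro N hN
    induction N, hN using Nat.le_induction with
    | base =>
      rw [hK, div_mul_cancel₀]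
      exact (Real.rpow_pos_of_pos hN0pos R).ne'
    | succ n hn ih =>
      have hn1 : 1 ≤ n := le_trans hN₀ hn
      have hnc : (1 : ℝ) ≤ (n : ℝ) := by exact_mod_cast hn1
      have hnR : (0 : ℝ) < (n : ℝ) + 1 - R := by linarith
      -- step 1 : (n+1-R) L(n+1) ≤ (n+1) L n
      have h1 : ((n : ℝ) + 1 - R) * L (n + 1) ≤ ((n : ℝ) + 1) * L n := by
        have hh := h (n + 1) (by omega)
        have hs := hLsucc n
        push_cast at hh
        nlinarith [hh]
      -- weighted AM-GM
      have young : (n : ℝ) ^ R * ((n : ℝ) + 1) ^ (1 - R) ≤ (n : ℝ) + 1 - R := by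
        have := Real.geom_mean_le_arith_mean2_weighted (le_of_lt hR0)
          (by linarith : (0:ℝ) ≤ 1 - R) (by linarith : (0:ℝ) ≤ (n:ℝ))
          (by linarith : (0:ℝ) ≤ (n:ℝ) + 1) (by ring)
        nlinarith [this]
      -- key : (n+1) * n^R ≤ (n+1-R) * (n+1)^R
      have key : ((n : ℝ) + 1) * (n : ℝ) ^ R ≤ ((n : ℝ) + 1 - R) * ((n : ℝ) + 1) ^ R := by
        have hpowpos : (0 : ℝ) < ((n : ℝ) + 1) ^ R :=
          Real.rpow_pos_of_pos (by linarith) R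
        have hmul := mul_le_mul_of_nonneg_right young hpowpos.le
        have hcomb : ((n : ℝ) + 1) ^ (1 - R) * ((n : ℝ) + 1) ^ R = (n : ℝ) + 1 := by
          rw [← Real.rpow_add (by linarith)]
          norm_num
        calc ((n : ℝ) + 1) * (n : ℝ) ^ R
            = (n : ℝ) ^ R * (((n : ℝ) + 1) ^ (1 - R) * ((n : ℝ) + 1) ^ R) := by
              rw [hcomb]; ring
          _ = (n : ℝ) ^ R * ((n : ℝ) + 1) ^ (1 - R) * ((n : ℝ) + 1) ^ R := by ring
          _ ≤ ((n : ℝ) + 1 - R) * ((n : ℝ) + 1) ^ R := hmul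
      -- combine
      have h2 : ((n : ℝ) + 1) * L n ≤ ((n : ℝ) + 1) * (K * (n : ℝ) ^ R) :=
        mul_le_mul_of_nonneg_left ih (by linarith)
      have h3 : ((n : ℝ) + 1) * (K * (n : ℝ) ^ R)
          ≤ ((n : ℝ) + 1 - R) * (K * ((n : ℝ) + 1) ^ R) := by
        have := mul_le_mul_of_nonneg_left key hKpos.le
        nlinarith [this]
      have h4 : ((n : ℝ) + 1 - R) * L (n + 1)
          ≤ ((n : ℝ) + 1 - R) * (K * ((n : ℝ) + 1) ^ R) :=
        le_trans h1 (le_trans h2 h3)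
      calc L (n + 1) ≤ K * ((n : ℝ) + 1) ^ R :=
            le_of_mul_le_mul_left h4 hnR
        _ = K * ((n + 1 : ℕ) : ℝ) ^ R := by push_cast; ring_nf
  refine ⟨L N₀, hLpos N₀ hN₀, ?_⟩
  intro N hN
  have hNc : (1 : ℝ) ≤ (N : ℝ) := by exact_mod_cast hN
  have hNpow : (1 : ℝ) ≤ (N : ℝ) ^ R := Real.one_le_rpow hNc hR0.le
  rcases le_or_gt N₀ N with hcase | hcase
  · have h1 := main N hcase
    have hKL : K ≤ L N₀ := by
      rw [hK, div_le_iff₀ (Real.rpow_pos_of_pos hN0pos R)]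
      have : (1 : ℝ) ≤ (N₀ : ℝ) ^ R :=
        Real.one_le_rpow (by exact_mod_cast hN₀) hR0.le
      nlinarith [hLpos N₀ hN₀]
    calc L N ≤ K * (N : ℝ) ^ R := h1
      _ ≤ L N₀ * (N : ℝ) ^ R := by
          apply mul_le_mul_of_nonneg_right hKL (by linarith)
  · have hmono' : L N ≤ L N₀ := by
      apply Finset.sum_le_sum_of_subset_of_nonneg
      · exact Finset.Icc_subset_Icc_right hcase.le
      · intro i hi _; exact (hpos i (Finset.mem_Icc.mp hi).1).le
    calc L N ≤ L N₀ := hmono'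
      _ ≤ L N₀ * (N : ℝ) ^ R := by nlinarith [hLpos N₀ hN₀]
end

section
/- Let u be a recurrent renewal sequence with lifetime distribution f. Then for every N ≥ 1, (N+1)/L(N+1) ≤ ∑_{k=0}^{N} u(k) ≤ (2N+1)/L(N+1). In particular ∑_{k=0}^{N} u(k) ≍ N/L(N). -/
open Finset

/-- `rnwL f N = ∑_{k=1}^{N} c(k)`. -/
noncomputable def rnwL (f : ℕ → ℝ) (N : ℕ) : ℝ := ∑ k ∈ Finset.Icc 1 N, rnwC f k

/-- For a recurrent renewal sequence `u` with lifetime distribution `f`,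
`(N+1)/L(N+1) ≤ ∑_{k=0}^{N} u k ≤ (2N+1)/L(N+1)` for all `N ≥ 1`; in particular
`∑_{k=0}^{N} u k ≍ N/L(N)`. -/
theorem stmt12 (f u : ℕ → ℝ)
    (hf0 : f 0 = 0) (hfpos : ∀ n, 0 ≤ f n) (hfsum : HasSum f 1)
    (hu0 : u 0 = 1)
    (hu : ∀ n, 1 ≤ n → u n = ∑ k ∈ Finset.Icc 1 n, f k * u (n - k)) :
    (∀ N : ℕ, 1 ≤ N →
      ((N : ℝ) + 1) / rnwL f (N + 1) ≤ ∑ k ∈ Finset.range (N + 1), u k ∧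
      ∑ k ∈ Finset.range (N + 1), u k ≤ (2 * (N : ℝ) + 1) / rnwL f (N + 1)) ∧
    ∃ C₁ C₂ : ℝ, 0 < C₁ ∧ 0 < C₂ ∧ ∀ N : ℕ, 1 ≤ N →
      C₁ * (N : ℝ) / rnwL f N ≤ ∑ k ∈ Finset.range (N + 1), u k ∧
      ∑ k ∈ Finset.range (N + 1), u k ≤ C₂ * (N : ℝ) / rnwL f N := by
  -- Basic properties of the tail c = rnwC f
  have hc_succ : ∀ m, rnwC f m = f m + rnwC f (m + 1) := by
    intro m
    have hs : Summable fun k => f (m + k) :=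
      hfsum.summable.comp_injective (add_right_injective m)
    rw [rnwC, Summable.tsum_eq_zero_add hs, add_zero, rnwC]
    congr 1
    exact tsum_congr fun k => by congr 1; omega
  have hc_nonneg : ∀ m, 0 ≤ rnwC f m := fun m => tsum_nonneg fun k => hfpos _
  have hc0 : rnwC f 0 = 1 := by
    rw [rnwC]
    simpa using hfsum.tsum_eq
  have hc1 : rnwC f 1 = 1 := by
    have h := hc_succ 0
    rw [hf0, hc0] at h; linarith
  have hc_anti : ∀ m, rnwC f (m + 1) ≤ rnwC f m := by
    intro m; have h := hc_succ m; have := hfpos m; linarith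
  have hc_le1 : ∀ m, rnwC f m ≤ 1 := by
    intro m
    have h : rnwC f m ≤ rnwC f 0 := by
      induction m with
      | zero => exact le_refl _
      | succ n ih => exact le_trans (hc_anti n) ih
    rw [hc0] at h
    exact h
  -- u is nonnegative
  have hu_nonneg : ∀ n, 0 ≤ u n := by
    intro n
    induction n using Nat.strong_induction_on with
    | _ n ih =>
      match n with
      | 0 => rw [hu0]; norm_num
      | Nat.succ m =>
        rw [hu (m + 1) (by omega)]
        apply Finset.sum_nonneg
        intro k hk
        rw [Finset.mem_Icc] at hk
        exact mul_nonneg (hfpos k) (ih _ (by omega))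
  -- the recurrence in range form
  have hu' : ∀ n, u (n + 1) = ∑ j ∈ Finset.range (n + 1), f (n + 1 - j) * u j := by
    intro n
    rw [hu (n + 1) (by omega), ← Finset.Ico_add_one_right_eq_Icc, Finset.sum_Ico_eq_sum_range]
    have h2 : n + 1 + 1 - 1 = n + 1 := by omega
    rw [h2, ← Finset.sum_range_reflect]
    apply Finset.sum_congr rfl
    intro j hj
    rw [Finset.mem_range] at hj
    congr 2 <;> omega
  -- Key identity: ∑_{j=0}^n u j · c (n+1-j) = 1
  have hA : ∀ n, ∑ j ∈ Finset.range (n + 1), u j * rnwC f (n + 1 - j) = 1 := by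
    intro n
    induction n with
    | zero => simp [hu0, hc1]
    | succ n ih =>
      rw [Finset.sum_range_succ]
      have hsplit : ∀ j ∈ Finset.range (n + 1),
          u j * rnwC f (n + 1 + 1 - j) = u j * rnwC f (n + 1 - j) - u j * f (n + 1 - j) := by
        intro j hj
        rw [Finset.mem_range] at hj
        have h1 : rnwC f (n + 1 - j) = f (n + 1 - j) + rnwC f (n + 1 + 1 - j) := by
          have h := hc_succ (n + 1 - j)
          have : n + 1 - j + 1 = n + 1 + 1 - j := by omega
          rw [this] at h
          exact h
        rw [h1]; ring
      rw [Finset.sum_congr rfl hsplit, Finset.sum_sub_distrib, ih]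
      have hur : ∑ j ∈ Finset.range (n + 1), u j * f (n + 1 - j) = u (n + 1) := by
        rw [hu' n]
        exact Finset.sum_congr rfl fun j _ => mul_comm _ _
      have hc1' : rnwC f (n + 1 + 1 - (n + 1)) = 1 := by
        have : n + 1 + 1 - (n + 1) = 1 := by omega
        rw [this, hc1]
      rw [hur, hc1']
      ring
  -- L basics
  have hL_nonneg : ∀ m, 0 ≤ rnwL f m := fun m =>
    Finset.sum_nonneg fun k _ => hc_nonneg k
  have hL_succ : ∀ m, rnwL f (m + 1) = rnwL f m + rnwC f (m + 1) := by
    intro m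
    rw [rnwL, rnwL, Finset.sum_Icc_succ_top (by omega : 1 ≤ m + 1)]
  have hL1 : rnwL f 1 = 1 := by
    rw [rnwL]
    simpa using hc1
  have hL_mono : ∀ m k : ℕ, m ≤ k → rnwL f m ≤ rnwL f k := by
    intro m k hmk
    rw [rnwL, rnwL]
    apply Finset.sum_le_sum_of_subset_of_nonneg
    · exact Finset.Icc_subset_Icc_right hmk
    · intro i _ _; exact hc_nonneg i
  have hL_ge1 : ∀ m : ℕ, 1 ≤ m → 1 ≤ rnwL f m := by
    intro m hm
    calc (1 : ℝ) = rnwL f 1 := hL1.symm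
    _ ≤ rnwL f m := hL_mono 1 m hm
  have hL_pos : ∀ m : ℕ, 1 ≤ m → 0 < rnwL f m := fun m hm =>
    lt_of_lt_of_le one_pos (hL_ge1 m hm)
  -- Summed identity: ∑_{j=0}^M u j · L (M+1-j) = M+1
  have hP : ∀ M : ℕ, ∑ j ∈ Finset.range (M + 1), u j * rnwL f (M + 1 - j) = (M : ℝ) + 1 := by
    intro M
    induction M with
    | zero => simp [hu0, hL1]
    | succ M ih =>
      rw [Finset.sum_range_succ]
      have hsplit : ∀ j ∈ Finset.range (M + 1),
          u j * rnwL f (M + 1 + 1 - j)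
            = u j * rnwL f (M + 1 - j) + u j * rnwC f (M + 1 + 1 - j) := by
        intro j hj
        rw [Finset.mem_range] at hj
        have h1 : rnwL f (M + 1 + 1 - j) = rnwL f (M + 1 - j) + rnwC f (M + 1 + 1 - j) := by
          have h := hL_succ (M + 1 - j)
          have e : M + 1 - j + 1 = M + 1 + 1 - j := by omega
          rw [e] at h
          exact h
        rw [h1]; ring
      rw [Finset.sum_congr rfl hsplit, Finset.sum_add_distrib, ih]
      have hAs : ∑ j ∈ Finset.range (M + 1), u j * rnwC f (M + 1 + 1 - j)
          = 1 - u (M + 1) := by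
        have h := hA (M + 1)
        rw [Finset.sum_range_succ] at h
        have e : M + 1 + 1 - (M + 1) = 1 := by omega
        rw [e, hc1, mul_one] at h
        linarith
      have e2 : M + 1 + 1 - (M + 1) = 1 := by omega
      rw [hAs, e2, hL1]
      push_cast
      ring
  -- Main bounds
  have main : ∀ N : ℕ, 1 ≤ N →
      ((N : ℝ) + 1) / rnwL f (N + 1) ≤ ∑ k ∈ Finset.range (N + 1), u k ∧
      ∑ k ∈ Finset.range (N + 1), u k ≤ (2 * (N : ℝ) + 1) / rnwL f (N + 1) := by
    intro N hN
    have hLpos : 0 < rnwL f (N + 1) := hL_pos (N + 1) (by omega)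
    constructor
    · rw [div_le_iff₀ hLpos]
      calc (N : ℝ) + 1 = ∑ j ∈ Finset.range (N + 1), u j * rnwL f (N + 1 - j) := (hP N).symm
      _ ≤ ∑ j ∈ Finset.range (N + 1), u j * rnwL f (N + 1) := by
          apply Finset.sum_le_sum
          intro j hj
          exact mul_le_mul_of_nonneg_left (hL_mono _ _ (by omega)) (hu_nonneg j)
      _ = (∑ k ∈ Finset.range (N + 1), u k) * rnwL f (N + 1) := by
          rw [← Finset.sum_mul]
    · rw [le_div_iff₀ hLpos]
      have key : (∑ k ∈ Finset.range (N + 1), u k) * rnwL f (N + 1)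
          ≤ 2 * (N : ℝ) + 1 := by
        have h2N := hP (2 * N)
        calc (∑ k ∈ Finset.range (N + 1), u k) * rnwL f (N + 1)
            = ∑ j ∈ Finset.range (N + 1), u j * rnwL f (N + 1) := by
              rw [← Finset.sum_mul]
        _ ≤ ∑ j ∈ Finset.range (N + 1), u j * rnwL f (2 * N + 1 - j) := by
              apply Finset.sum_le_sum
              intro j hj
              rw [Finset.mem_range] at hj
              exact mul_le_mul_of_nonneg_left (hL_mono _ _ (by omega)) (hu_nonneg j)
        _ ≤ ∑ j ∈ Finset.range (2 * N + 1), u j * rnwL f (2 * N + 1 - j) := by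
              apply Finset.sum_le_sum_of_subset_of_nonneg
              · exact Finset.range_subset_range.mpr (by omega)
              · intro i _ _
                exact mul_nonneg (hu_nonneg i) (hL_nonneg _)
        _ = 2 * (N : ℝ) + 1 := by rw [h2N]; push_cast; ring
      exact key
  refine ⟨main, 1/2, 3, by norm_num, by norm_num, ?_⟩
  intro N hN
  obtain ⟨hlow, hhigh⟩ := main N hN
  have hLN : 0 < rnwL f N := hL_pos N hN
  have hLN1 : 0 < rnwL f (N + 1) := hL_pos (N + 1) (by omega)
  have hLle : rnwL f (N + 1) ≤ 2 * rnwL f N := by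
    have h1 := hL_succ N
    have h2 := hc_le1 (N + 1)
    have h3 := hL_ge1 N hN
    linarith
  have hNpos : (1 : ℝ) ≤ (N : ℝ) := by exact_mod_cast hN
  constructor
  · have step : (1/2 : ℝ) * N / rnwL f N ≤ ((N : ℝ) + 1) / rnwL f (N + 1) := by
      rw [div_le_div_iff₀ hLN hLN1]
      nlinarith [hL_nonneg N, hL_nonneg (N + 1)]
    exact le_trans step hlow
  · have step : (2 * (N : ℝ) + 1) / rnwL f (N + 1) ≤ 3 * (N : ℝ) / rnwL f N := by
      rw [div_le_div_iff₀ hLN1 hLN]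
      have := hL_mono N (N + 1) (by omega)
      nlinarith
    exact le_trans hhigh step
end
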